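/- arXiv:1405.2718 — 7 statements merged into one kernel-verified Lean document; each statement's English description precedes it below -/
import Mathlib

section
/- In a zero-sum multi-player game, a strategy profile σ satisfies the individual guarantee condition (V^k(σ) ≤ V^k(σ^k, s^{-k}) for all k and all s^{-k}) if and only if for every proper subset A of players the coalition payoff satisfies V^A(σ^A, σ^{-A}) ≥ V^A(s^A, σ^{-A}) for all s^A, and this holds if and only if σ is an optimal equilibrium. -/
/-- The profile in which the coalition `A` plays `τ` while all remaining players
play according to `ρ`, i.e. `(τ^A, ρ^{-A})`. -/
def comb {ι : Type*} [DecidableEq ι] {S : ι → Type*} (A : Finset ι)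
    (τ ρ : ∀ i, S i) : ∀ i, S i :=
  fun i => if i ∈ A then τ i else ρ i

/-!
In a zero-sum game a coalition gains exactly what its complement loses. If every player's
strategy in `σ` guarantees them `V^k(σ)` whatever the others do, then against any deviation
of a coalition `A` the players outside `A`, who keep playing `σ`, lose nothing, so `A` gains
nothing. Conversely, the guarantee of player `k` is the statement that the proper coalition
`M \ {k}` cannot gain by deviating. Taking `A = {k}` shows that a profile with the guarantee
property is also a Nash equilibrium, hence optimal.
-/

section comb

variable {ι : Type*} [DecidableEq ι] {S : ι → Type*}

lemma comb_apply_of_notMem {A : Finset ι} {k : ι} (hk : k ∉ A) (τ ρ : ∀ i, S i) :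
    comb A τ ρ k = ρ k :=
  if_neg hk

lemma comb_singleton (k : ι) (τ ρ : ∀ i, S i) :
    comb {k} τ ρ = Function.update ρ k (τ k) := by
  funext i
  by_cases hi : i = k
  · subst hi
    simp [comb]
  · simp [comb, hi]

lemma comb_compl_singleton [Fintype ι] (k : ι) (τ ρ : ∀ i, S i) :
    comb {k}ᶜ τ ρ = Function.update τ k (ρ k) := by
  funext i
  by_cases hi : i = k
  · subst hi
    simp [comb]
  · simp [comb, hi]

end comb

section ZeroSum

variable {ι M : Type*} [Fintype ι] [DecidableEq ι] [AddCommGroup M] [PartialOrder M]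
  [IsOrderedAddMonoid M]

lemma sum_le_sum_iff_sum_compl_le {X : Type*} {V : ι → X → M} (hzs : ∀ x, ∑ i, V i x = 0)
    (A : Finset ι) (x y : X) :
    ∑ i ∈ A, V i x ≤ ∑ i ∈ A, V i y ↔ ∑ i ∈ Aᶜ, V i y ≤ ∑ i ∈ Aᶜ, V i x := by
  have hcompl (z : X) : ∑ i ∈ Aᶜ, V i z = -∑ i ∈ A, V i z :=
    eq_neg_of_add_eq_zero_right ((Finset.sum_add_sum_compl A _).trans (hzs z))
  rw [hcompl, hcompl, neg_le_neg_iff]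

variable {S : ι → Type*} {V : ι → (∀ i, S i) → M} {σ : ∀ i, S i}

lemma sum_comb_le_of_guarantee (hzs : ∀ s, ∑ i, V i s = 0)
    (hg : ∀ k, ∀ ρ : ∀ i, S i, V k σ ≤ V k (Function.update ρ k (σ k)))
    (A : Finset ι) (τ : ∀ i, S i) :
    ∑ i ∈ A, V i (comb A τ σ) ≤ ∑ i ∈ A, V i σ := by
  rw [sum_le_sum_iff_sum_compl_le hzs]
  refine Finset.sum_le_sum fun k hk => ?_
  have hkA : k ∉ A := Finset.mem_compl.mp hk
  simpa [← comb_apply_of_notMem hkA τ σ] using hg k (comb A τ σ)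

lemma guarantee_of_sum_comb_le (hzs : ∀ s, ∑ i, V i s = 0)
    (hc : ∀ A : Finset ι, A ≠ Finset.univ →
      ∀ τ : ∀ i, S i, ∑ i ∈ A, V i (comb A τ σ) ≤ ∑ i ∈ A, V i σ)
    (k : ι) (ρ : ∀ i, S i) :
    V k σ ≤ V k (Function.update ρ k (σ k)) := by
  have h := hc {k}ᶜ (by simp [Finset.eq_univ_iff_forall]) ρ
  rwa [sum_le_sum_iff_sum_compl_le hzs, compl_compl, comb_compl_singleton,
    Finset.sum_singleton, Finset.sum_singleton] at h

lemma le_of_update_of_guarantee (hzs : ∀ s, ∑ i, V i s = 0)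
    (hg : ∀ k, ∀ ρ : ∀ i, S i, V k σ ≤ V k (Function.update ρ k (σ k)))
    (k : ι) (a : S k) :
    V k (Function.update σ k a) ≤ V k σ := by
  simpa [comb_singleton] using
    sum_comb_le_of_guarantee hzs hg {k} (Function.update σ k a)

end ZeroSum

theorem zero_sum_guarantee_iff_coalition_iff_optimal_general {ι : Type*} [Fintype ι]
    [DecidableEq ι] {S : ι → Type*}
    (V : ι → (∀ i, S i) → ℝ)
    (hzs : ∀ s : ∀ i, S i, ∑ i, V i s = 0)
    (σ : ∀ i, S i) :
    ((∀ k, ∀ ρ : ∀ i, S i, V k σ ≤ V k (Function.update ρ k (σ k))) ↔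
      (∀ A : Finset ι, A ≠ Finset.univ →
        ∀ τ : ∀ i, S i, ∑ i ∈ A, V i (comb A τ σ) ≤ ∑ i ∈ A, V i σ)) ∧
    ((∀ A : Finset ι, A ≠ Finset.univ →
        ∀ τ : ∀ i, S i, ∑ i ∈ A, V i (comb A τ σ) ≤ ∑ i ∈ A, V i σ) ↔
      ((∀ k, ∀ ρ : ∀ i, S i, V k σ ≤ V k (Function.update ρ k (σ k))) ∧
        (∀ k, ∀ a : S k, V k (Function.update σ k a) ≤ V k σ))) := by
  have coalition_of_guarantee := fun hg A (_ : A ≠ Finset.univ) =>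
    sum_comb_le_of_guarantee (σ := σ) hzs hg A
  have guarantee_of_coalition := guarantee_of_sum_comb_le (σ := σ) hzs
  refine ⟨⟨coalition_of_guarantee, guarantee_of_coalition⟩,
    ⟨fun hc => ?_, fun h => coalition_of_guarantee h.1⟩⟩
  have hg := guarantee_of_coalition hc
  exact ⟨hg, le_of_update_of_guarantee hzs hg⟩

/-- In a zero-sum multi-player game, a strategy profile `σ` satisfies the individual
guarantee condition (`V^k(σ) ≤ V^k(σ^k, s^{-k})` for all `k` and all `s^{-k}`)
if and only if for every proper subset `A` of players the coalition payoff
satisfies `V^A(σ^A, σ^{-A}) ≥ V^A(s^A, σ^{-A})` for all `s^A`, and this holds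
if and only if `σ` is an optimal equilibrium. -/
theorem zero_sum_guarantee_iff_coalition_iff_optimal {ι : Type*} [Fintype ι]
    [DecidableEq ι] {S : ι → Type*} [∀ i, Nonempty (S i)]
    (V : ι → (∀ i, S i) → ℝ)
    (hzs : ∀ s : ∀ i, S i, ∑ i, V i s = 0)
    (σ : ∀ i, S i) :
    ((∀ k, ∀ ρ : ∀ i, S i, V k σ ≤ V k (Function.update ρ k (σ k))) ↔
      (∀ A : Finset ι, A ≠ Finset.univ →
        ∀ τ : ∀ i, S i, ∑ i ∈ A, V i (comb A τ σ) ≤ ∑ i ∈ A, V i σ)) ∧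
    ((∀ A : Finset ι, A ≠ Finset.univ →
        ∀ τ : ∀ i, S i, ∑ i ∈ A, V i (comb A τ σ) ≤ ∑ i ∈ A, V i σ) ↔
      ((∀ k, ∀ ρ : ∀ i, S i, V k σ ≤ V k (Function.update ρ k (σ k))) ∧
        (∀ k, ∀ a : S k, V k (Function.update σ k a) ≤ V k σ))) :=
  zero_sum_guarantee_iff_coalition_iff_optimal_general V hzs σ
end

section
/- Let (Y_i)_{i∈I} be a family of F_u-measurable random variables with the lattice property and E(ess sup_i |Y_i|) < ∞. Then there exists a sequence (i_n) in I such that (Y_{i_n}) is almost surely non-decreasing and converges almost surely to ess sup_{i∈I} Y_i; similarly there is a sequence along which the family decreases to the essential infimum. -/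
/-!
Let `S = sup_i E[Y_i]`, which is finite since `|Y_i| ≤ g`. Directedness turns a sequence of
indices whose expectations tend to `S` into one along which `Y` increases a.s.; call its limit
`L`. For any `i`, directedness again bounds `E[max (Y_i, Y_{f n})]` by `S`, so dominated
convergence gives `E[max (Y_i, L)] ≤ S = E[L]`, forcing `Y_i ≤ L` a.s. Hence `L` is the essential
supremum. The essential infimum is the same statement for `-Y`.
-/

open MeasureTheory Filter Set Topology

theorem MeasureTheory.Integrable.of_tendsto_ae_of_norm_le {Ω E : Type*} {m : MeasurableSpace Ω}
    {μ : Measure Ω} [NormedAddCommGroup E] {F : ℕ → Ω → E} {G : Ω → E} {g : Ω → ℝ}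
    (hF : ∀ n, AEStronglyMeasurable (F n) μ) (hg : Integrable g μ)
    (hFg : ∀ n, ∀ᵐ ω ∂μ, ‖F n ω‖ ≤ g ω)
    (hFG : ∀ᵐ ω ∂μ, Tendsto (fun n => F n ω) atTop (𝓝 (G ω))) :
    Integrable G μ := by
  refine hg.mono' (aestronglyMeasurable_of_tendsto_ae _ hF hFG) ?_
  filter_upwards [ae_all_iff.2 hFg, hFG] with ω hb hl
  exact le_of_tendsto' hl.norm hb

section EssSup

variable {Ω I : Type*} {m : MeasurableSpace Ω} {μ : Measure Ω} {Y : I → Ω → ℝ} {g : Ω → ℝ}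

theorem exists_ae_monotone_seq_ge
    (hup : ∀ i j, ∃ k, ∀ᵐ ω ∂μ, max (Y i ω) (Y j ω) ≤ Y k ω) (j : ℕ → I) :
    ∃ f : ℕ → I, (∀ᵐ ω ∂μ, Monotone fun n => Y (f n) ω) ∧
      ∀ n, ∀ᵐ ω ∂μ, Y (j n) ω ≤ Y (f n) ω := by
  choose k hk using hup
  let f : ℕ → I := fun n => Nat.rec (j 0) (fun n fn => k fn (j (n + 1))) n
  have hstep : ∀ n, ∀ᵐ ω ∂μ, max (Y (f n) ω) (Y (j (n + 1)) ω) ≤ Y (f (n + 1)) ω :=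
    fun n => hk _ _
  refine ⟨f, ?_, ?_⟩
  · filter_upwards [ae_all_iff.2 hstep] with ω hω
    exact monotone_nat_of_le_succ fun n => (le_max_left _ _).trans (hω n)
  · rintro (_ | n)
    · exact ae_of_all _ fun ω => le_rfl
    · exact (hstep n).mono fun ω h => (le_max_right _ _).trans h

theorem integrable_of_abs_le (hmeas : ∀ i, Measurable (Y i)) (hg : Integrable g μ)
    (hgb : ∀ i, ∀ᵐ ω ∂μ, |Y i ω| ≤ g ω) (i : I) : Integrable (Y i) μ :=
  hg.mono' (hmeas i).aestronglyMeasurable (by simpa only [Real.norm_eq_abs] using hgb i)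

theorem bddAbove_range_integral_of_abs_le (hmeas : ∀ i, Measurable (Y i))
    (hg : Integrable g μ) (hgb : ∀ i, ∀ᵐ ω ∂μ, |Y i ω| ≤ g ω) :
    BddAbove (range fun i => ∫ ω, Y i ω ∂μ) := by
  refine ⟨∫ ω, g ω ∂μ, ?_⟩
  rintro _ ⟨i, rfl⟩
  exact integral_mono_ae (integrable_of_abs_le hmeas hg hgb i) hg
    ((hgb i).mono fun ω h => (le_abs_self _).trans h)

theorem exists_ae_monotone_tendsto_iSup_integral [Nonempty I] (hmeas : ∀ i, Measurable (Y i))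
    (hup : ∀ i j, ∃ k, ∀ᵐ ω ∂μ, max (Y i ω) (Y j ω) ≤ Y k ω)
    (hg : Integrable g μ) (hgb : ∀ i, ∀ᵐ ω ∂μ, |Y i ω| ≤ g ω) :
    ∃ f : ℕ → I, (∀ᵐ ω ∂μ, Monotone fun n => Y (f n) ω) ∧
      Tendsto (fun n => ∫ ω, Y (f n) ω ∂μ) atTop (𝓝 (⨆ i, ∫ ω, Y i ω ∂μ)) := by
  have hint := integrable_of_abs_le hmeas hg hgb
  have hbdd := bddAbove_range_integral_of_abs_le hmeas hg hgb
  obtain ⟨u, -, hu, hu_mem⟩ := exists_seq_tendsto_sSup (range_nonempty _) hbdd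
  choose j hj using hu_mem
  obtain ⟨f, hf_mono, hjf⟩ := exists_ae_monotone_seq_ge hup j
  refine ⟨f, hf_mono, tendsto_of_tendsto_of_tendsto_of_le_of_le hu tendsto_const_nhds
    (fun n => ?_) (fun n => le_ciSup hbdd (f n))⟩
  rw [← hj n]
  exact integral_mono_ae (hint _) (hint _) (hjf n)

theorem ae_le_of_tendsto_integral_iSup (hmeas : ∀ i, Measurable (Y i))
    (hup : ∀ i j, ∃ k, ∀ᵐ ω ∂μ, max (Y i ω) (Y j ω) ≤ Y k ω)
    (hg : Integrable g μ) (hgb : ∀ i, ∀ᵐ ω ∂μ, |Y i ω| ≤ g ω) {f : ℕ → I} {L : Ω → ℝ}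
    (hfL : ∀ᵐ ω ∂μ, Tendsto (fun n => Y (f n) ω) atTop (𝓝 (L ω)))
    (hf : Tendsto (fun n => ∫ ω, Y (f n) ω ∂μ) atTop (𝓝 (⨆ i, ∫ ω, Y i ω ∂μ))) (i : I) :
    ∀ᵐ ω ∂μ, Y i ω ≤ L ω := by
  have hint := integrable_of_abs_le hmeas hg hgb
  choose k hk using fun n => hup i (f n)
  have hf_meas n : AEStronglyMeasurable (Y (f n)) μ := (hmeas (f n)).aestronglyMeasurable
  have hmax_meas n : AEStronglyMeasurable (fun ω => max (Y i ω) (Y (f n) ω)) μ :=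
    ((hmeas i).max (hmeas (f n))).aestronglyMeasurable
  have hf_bound n : ∀ᵐ ω ∂μ, ‖Y (f n) ω‖ ≤ g ω := by simpa only [Real.norm_eq_abs] using hgb (f n)
  have hmax_bound n : ∀ᵐ ω ∂μ, ‖max (Y i ω) (Y (f n) ω)‖ ≤ g ω := by
    filter_upwards [hgb i, hgb (f n)] with ω hi hfn
    exact abs_max_le_max_abs_abs.trans (max_le hi hfn)
  have hmax_lim : ∀ᵐ ω ∂μ, Tendsto (fun n => max (Y i ω) (Y (f n) ω)) atTop
      (𝓝 (max (Y i ω) (L ω))) := hfL.mono fun ω h => tendsto_const_nhds.max h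
  have hL_int := Integrable.of_tendsto_ae_of_norm_le hf_meas hg hf_bound hfL
  have hmaxL_int := Integrable.of_tendsto_ae_of_norm_le hmax_meas hg hmax_bound hmax_lim
  have hL_eq : ∫ ω, L ω ∂μ = ⨆ i, ∫ ω, Y i ω ∂μ :=
    tendsto_nhds_unique (tendsto_integral_of_dominated_convergence g hf_meas hg hf_bound hfL) hf
  have hmax_le : ∫ ω, max (Y i ω) (L ω) ∂μ ≤ ∫ ω, L ω ∂μ := by
    refine hL_eq ▸ le_of_tendsto'
      (tendsto_integral_of_dominated_convergence g hmax_meas hg hmax_bound hmax_lim) fun n => ?_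
    exact (integral_mono_ae (hg.mono' (hmax_meas n) (hmax_bound n)) (hint _) (hk n)).trans
      (le_ciSup (bddAbove_range_integral_of_abs_le hmeas hg hgb) _)
  have hL_max : L =ᵐ[μ] fun ω => max (Y i ω) (L ω) :=
    (integral_eq_iff_of_ae_le hL_int hmaxL_int (ae_of_all _ fun ω => le_max_right _ _)).1
      (le_antisymm (integral_mono hL_int hmaxL_int fun ω => le_max_right _ _) hmax_le)
  filter_upwards [hL_max] with ω h
  exact h ▸ le_max_left _ _

theorem exists_ae_monotone_tendsto_essSup [Nonempty I] (hmeas : ∀ i, Measurable (Y i))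
    (hup : ∀ i j, ∃ k, ∀ᵐ ω ∂μ, max (Y i ω) (Y j ω) ≤ Y k ω)
    (hg : Integrable g μ) (hgb : ∀ i, ∀ᵐ ω ∂μ, |Y i ω| ≤ g ω) {Z : Ω → ℝ}
    (hZub : ∀ i, ∀ᵐ ω ∂μ, Y i ω ≤ Z ω)
    (hZlub : ∀ Z' : Ω → ℝ, Measurable Z' → (∀ i, ∀ᵐ ω ∂μ, Y i ω ≤ Z' ω) →
      ∀ᵐ ω ∂μ, Z ω ≤ Z' ω) :
    ∃ f : ℕ → I, (∀ᵐ ω ∂μ, Monotone fun n => Y (f n) ω) ∧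
      ∀ᵐ ω ∂μ, Tendsto (fun n => Y (f n) ω) atTop (𝓝 (Z ω)) := by
  obtain ⟨f, hf_mono, hf_int⟩ := exists_ae_monotone_tendsto_iSup_integral hmeas hup hg hgb
  let L ω := ⨆ n, Y (f n) ω
  have hfL : ∀ᵐ ω ∂μ, Tendsto (fun n => Y (f n) ω) atTop (𝓝 (L ω)) := by
    filter_upwards [hf_mono, ae_all_iff.2 fun n => hgb (f n)] with ω hmono hbound
    exact tendsto_atTop_ciSup hmono
      ⟨g ω, by rintro _ ⟨n, rfl⟩; exact (le_abs_self _).trans (hbound n)⟩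
  have hZL : ∀ᵐ ω ∂μ, Z ω ≤ L ω := hZlub L (Measurable.iSup fun n => hmeas (f n))
    (ae_le_of_tendsto_integral_iSup hmeas hup hg hgb hfL hf_int)
  have hLZ : ∀ᵐ ω ∂μ, L ω ≤ Z ω := by
    filter_upwards [hfL, ae_all_iff.2 fun n => hZub (f n)] with ω hlim hle
    exact le_of_tendsto' hlim hle
  refine ⟨f, hf_mono, ?_⟩
  filter_upwards [hfL, hZL, hLZ] with ω hlim h₁ h₂
  rwa [le_antisymm h₂ h₁] at hlim

theorem exists_ae_antitone_tendsto_essInf [Nonempty I] (hmeas : ∀ i, Measurable (Y i))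
    (hdown : ∀ i j, ∃ l, ∀ᵐ ω ∂μ, Y l ω ≤ min (Y i ω) (Y j ω))
    (hg : Integrable g μ) (hgb : ∀ i, ∀ᵐ ω ∂μ, |Y i ω| ≤ g ω) {W : Ω → ℝ}
    (hWlb : ∀ i, ∀ᵐ ω ∂μ, W ω ≤ Y i ω)
    (hWglb : ∀ W' : Ω → ℝ, Measurable W' → (∀ i, ∀ᵐ ω ∂μ, W' ω ≤ Y i ω) →
      ∀ᵐ ω ∂μ, W' ω ≤ W ω) :
    ∃ f : ℕ → I, (∀ᵐ ω ∂μ, Antitone fun n => Y (f n) ω) ∧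
      ∀ᵐ ω ∂μ, Tendsto (fun n => Y (f n) ω) atTop (𝓝 (W ω)) := by
  have hup (i j : I) : ∃ l, ∀ᵐ ω ∂μ, max (-Y i ω) (-Y j ω) ≤ -Y l ω := by
    obtain ⟨l, hl⟩ := hdown i j
    exact ⟨l, hl.mono fun ω h => by rwa [max_neg_neg, neg_le_neg_iff]⟩
  obtain ⟨f, hf_mono, hf_lim⟩ := exists_ae_monotone_tendsto_essSup (Y := fun i ω => -Y i ω)
    (fun i => (hmeas i).neg) hup hg (by simpa only [abs_neg] using hgb) (Z := fun ω => -W ω)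
    (fun i => (hWlb i).mono fun ω h => neg_le_neg h)
    (fun Z' hZ' hle => (hWglb (fun ω => -Z' ω) hZ'.neg fun i =>
      (hle i).mono fun ω h => neg_le.1 h).mono fun ω h => neg_le.1 h)
  refine ⟨f, hf_mono.mono fun ω h => ?_, hf_lim.mono fun ω h => by simpa using h.neg⟩
  exact fun a b hab => neg_le_neg_iff.1 (h hab)

end EssSup

theorem essSup_attained_by_monotone_sequence_general {Ω : Type*} {m : MeasurableSpace Ω}
    (μ : Measure Ω) {I : Type*} [Nonempty I]
    (Y : I → Ω → ℝ) (hmeas : ∀ i, Measurable (Y i))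
    (hlat : ∀ i j : I,
      (∃ k, ∀ᵐ ω ∂μ, max (Y i ω) (Y j ω) ≤ Y k ω) ∧
      (∃ l, ∀ᵐ ω ∂μ, Y l ω ≤ min (Y i ω) (Y j ω)))
    (g : Ω → ℝ) (hg : Integrable g μ) (hgb : ∀ i, ∀ᵐ ω ∂μ, |Y i ω| ≤ g ω)
    (Z W : Ω → ℝ)
    (hZub : ∀ i, ∀ᵐ ω ∂μ, Y i ω ≤ Z ω)
    (hZlub : ∀ Z' : Ω → ℝ, Measurable Z' → (∀ i, ∀ᵐ ω ∂μ, Y i ω ≤ Z' ω) →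
      ∀ᵐ ω ∂μ, Z ω ≤ Z' ω)
    (hWlb : ∀ i, ∀ᵐ ω ∂μ, W ω ≤ Y i ω)
    (hWglb : ∀ W' : Ω → ℝ, Measurable W' → (∀ i, ∀ᵐ ω ∂μ, W' ω ≤ Y i ω) →
      ∀ᵐ ω ∂μ, W' ω ≤ W ω) :
    (∃ f : ℕ → I, (∀ᵐ ω ∂μ, Monotone fun n => Y (f n) ω) ∧
      (∀ᵐ ω ∂μ, Tendsto (fun n => Y (f n) ω) atTop (nhds (Z ω)))) ∧
    (∃ f : ℕ → I, (∀ᵐ ω ∂μ, Antitone fun n => Y (f n) ω) ∧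
      (∀ᵐ ω ∂μ, Tendsto (fun n => Y (f n) ω) atTop (nhds (W ω)))) :=
  ⟨exists_ae_monotone_tendsto_essSup hmeas (fun i j => (hlat i j).1) hg hgb hZub hZlub,
    exists_ae_antitone_tendsto_essInf hmeas (fun i j => (hlat i j).2) hg hgb hWlb hWglb⟩

/-- Let `(Y_i)_{i∈I}` be a family of measurable random variables with the lattice
property and `E(ess sup_i |Y_i|) < ∞` (encoded by an integrable dominating
function `g`). If `Z` is the essential supremum of the family (the least upper
bound in the a.s. order) and `W` its essential infimum, then there exists a
sequence along which the family increases a.s. to `Z`, and a sequence along which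
it decreases a.s. to `W`. -/
theorem essSup_attained_by_monotone_sequence {Ω : Type*} {m : MeasurableSpace Ω}
    (μ : Measure Ω) [IsProbabilityMeasure μ] {I : Type*} [Nonempty I]
    (Y : I → Ω → ℝ) (hmeas : ∀ i, Measurable (Y i))
    (hlat : ∀ i j : I,
      (∃ k, ∀ᵐ ω ∂μ, max (Y i ω) (Y j ω) ≤ Y k ω) ∧
      (∃ l, ∀ᵐ ω ∂μ, Y l ω ≤ min (Y i ω) (Y j ω)))
    (g : Ω → ℝ) (hg : Integrable g μ) (hgb : ∀ i, ∀ᵐ ω ∂μ, |Y i ω| ≤ g ω)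
    (Z W : Ω → ℝ) (hZmeas : Measurable Z) (hWmeas : Measurable W)
    (hZub : ∀ i, ∀ᵐ ω ∂μ, Y i ω ≤ Z ω)
    (hZlub : ∀ Z' : Ω → ℝ, Measurable Z' → (∀ i, ∀ᵐ ω ∂μ, Y i ω ≤ Z' ω) →
      ∀ᵐ ω ∂μ, Z ω ≤ Z' ω)
    (hWlb : ∀ i, ∀ᵐ ω ∂μ, W ω ≤ Y i ω)
    (hWglb : ∀ W' : Ω → ℝ, Measurable W' → (∀ i, ∀ᵐ ω ∂μ, W' ω ≤ Y i ω) →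
      ∀ᵐ ω ∂μ, W' ω ≤ W ω) :
    (∃ f : ℕ → I, (∀ᵐ ω ∂μ, Monotone fun n => Y (f n) ω) ∧
      (∀ᵐ ω ∂μ, Tendsto (fun n => Y (f n) ω) atTop (nhds (Z ω)))) ∧
    (∃ f : ℕ → I, (∀ᵐ ω ∂μ, Antitone fun n => Y (f n) ω) ∧
      (∀ᵐ ω ∂μ, Tendsto (fun n => Y (f n) ω) atTop (nhds (W ω)))) :=
  essSup_attained_by_monotone_sequence_general (m := m) μ Y hmeas hlat g hg hgb Z W hZub hZlub hWlb
    hWglb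
end

section
/- Let (Y_i)_{i∈I} be a family of F_u-measurable random variables with the lattice property and E(ess sup_i |Y_i|) < ∞. Then for any σ-field F_t ⊆ F_u, conditional expectation commutes with the essential supremum: E(ess sup_{i∈I} Y_i | F_t) = ess sup_{i∈I} E(Y_i | F_t) almost surely, and the analogous identity holds for the essential infimum. -/
open MeasureTheory Filter
open scoped Topology

lemma aux_condexp_essSup {Ω : Type*} {m0 : MeasurableSpace Ω}
    (μ : Measure Ω) [IsProbabilityMeasure μ]
    (mt : MeasurableSpace Ω) (hmt : mt ≤ m0) {I : Type*} [Nonempty I]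
    (Y : I → Ω → ℝ) (hmeas : ∀ i, Measurable[m0] (Y i))
    (hdir : ∀ i j : I, ∃ k, ∀ᵐ ω ∂μ, max (Y i ω) (Y j ω) ≤ Y k ω)
    (g : Ω → ℝ) (hg : Integrable g μ) (hgb : ∀ i, ∀ᵐ ω ∂μ, |Y i ω| ≤ g ω)
    (Z : Ω → ℝ) (hZmeas : Measurable[m0] Z)
    (hZub : ∀ i, Y i ≤ᵐ[μ] Z)
    (hZlub : ∀ Z' : Ω → ℝ, Measurable[m0] Z' → (∀ i, Y i ≤ᵐ[μ] Z') → Z ≤ᵐ[μ] Z') :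
    (∀ i, μ[Y i|mt] ≤ᵐ[μ] μ[Z|mt]) ∧
      (∀ U : Ω → ℝ, (∀ i, μ[Y i|mt] ≤ᵐ[μ] U) → μ[Z|mt] ≤ᵐ[μ] U) := by
  obtain ⟨i₀⟩ := ‹Nonempty I›
  have hmeas0 : ∀ i, Measurable[m0] (Y i) := fun i => hmeas i
  have hYleg : ∀ i, Y i ≤ᵐ[μ] g := fun i =>
    (hgb i).mono fun ω h => (le_abs_self _).trans h
  have hYint : ∀ i, Integrable (Y i) μ := fun i =>
    hg.mono' ((hmeas0 i).aestronglyMeasurable)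
      ((hgb i).mono fun ω h => by simpa [Real.norm_eq_abs] using h)
  -- the sup of integrals
  set S : ℝ := ⨆ i, ∫ ω, Y i ω ∂μ with hSdef
  have hbdd : BddAbove (Set.range fun i => ∫ ω, Y i ω ∂μ) := by
    refine ⟨∫ ω, g ω ∂μ, ?_⟩
    rintro _ ⟨i, rfl⟩
    exact integral_mono_ae (hYint i) hg (hYleg i)
  have hleS : ∀ i, ∫ ω, Y i ω ∂μ ≤ S := fun i => le_ciSup hbdd i
  have hjseq : ∀ n : ℕ, ∃ j, S - 1 / (n + 1) < ∫ ω, Y j ω ∂μ := by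
    intro n
    refine exists_lt_of_lt_ciSup ?_
    have : (0:ℝ) < 1 / (n + 1) := by positivity
    linarith
  choose j hj using hjseq
  choose K hK using hdir
  -- increasing sequence
  set q : ℕ → I := fun n => Nat.rec (j 0) (fun n ih => K ih (j (n + 1))) n with hqdef
  have hqsucc : ∀ n, q (n + 1) = K (q n) (j (n + 1)) := fun n => rfl
  have hmono : ∀ n, Y (q n) ≤ᵐ[μ] Y (q (n + 1)) := fun n => by
    rw [hqsucc]
    exact (hK (q n) (j (n + 1))).mono fun ω h => (le_max_left _ _).trans h
  have hjle : ∀ n, Y (j n) ≤ᵐ[μ] Y (q n) := by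
    intro n
    cases n with
    | zero => exact Eventually.of_forall fun ω => le_rfl
    | succ n =>
      rw [hqsucc]
      exact (hK (q n) (j (n + 1))).mono fun ω h => (le_max_right _ _).trans h
  have hqlow : ∀ n : ℕ, S - 1 / (n + 1) < ∫ ω, Y (q n) ω ∂μ := fun n =>
    (hj n).trans_le (integral_mono_ae (hYint _) (hYint _) (hjle n))
  have hStend : Tendsto (fun n => ∫ ω, Y (q n) ω ∂μ) atTop (𝓝 S) := by
    have hlow : Tendsto (fun n : ℕ => S - 1 / (n + 1 : ℝ)) atTop (𝓝 S) := by
      have h1 := tendsto_one_div_add_atTop_nhds_zero_nat (𝕜 := ℝ)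
      have h2 := (tendsto_const_nhds (x := S) (f := atTop)).sub h1
      simpa using h2
    exact tendsto_of_tendsto_of_tendsto_of_le_of_le hlow tendsto_const_nhds
      (fun n => (hqlow n).le) (fun n => hleS (q n))
  -- Z₀
  set Z₀ : Ω → ℝ := fun ω => ⨆ n, min (Y (q n) ω) (Z ω) with hZ₀def
  have hZ₀meas : Measurable[m0] Z₀ :=
    Measurable.iSup fun n => (hmeas _).min hZmeas
  have hZ₀meas0 : Measurable[m0] Z₀ := hZ₀meas
  have hZ₀leZ : ∀ ω, Z₀ ω ≤ Z ω := fun ω => ciSup_le fun n => min_le_right _ _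
  have hE : ∀ᵐ ω ∂μ, ∀ n, Y (q n) ω ≤ Z ω ∧ Y (q n) ω ≤ Y (q (n + 1)) ω ∧
      |Y (q n) ω| ≤ g ω := by
    rw [ae_all_iff]
    intro n
    filter_upwards [hZub (q n), hmono n, hgb (q n)] with ω h1 h2 h3
    exact ⟨h1, h2, h3⟩
  have htendZ₀ : ∀ᵐ ω ∂μ, Tendsto (fun n => Y (q n) ω) atTop (𝓝 (Z₀ ω)) := by
    filter_upwards [hE] with ω hω
    have hmin : ∀ n, min (Y (q n) ω) (Z ω) = Y (q n) ω := fun n =>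
      min_eq_left (hω n).1
    have hZ₀eq : Z₀ ω = ⨆ n, Y (q n) ω := by
      simp only [hZ₀def]
      exact iSup_congr hmin
    rw [hZ₀eq]
    refine tendsto_atTop_ciSup (monotone_nat_of_le_succ fun n => (hω n).2.1) ?_
    exact ⟨Z ω, by rintro _ ⟨n, rfl⟩; exact (hω n).1⟩
  have htendint : Tendsto (fun n => ∫ ω, Y (q n) ω ∂μ) atTop (𝓝 (∫ ω, Z₀ ω ∂μ)) := by
    refine tendsto_integral_of_dominated_convergence g
      (fun n => (hmeas0 _).aestronglyMeasurable) hg ?_ htendZ₀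
    intro n
    exact (hgb (q n)).mono fun ω h => by simpa [Real.norm_eq_abs] using h
  have hintZ₀ : ∫ ω, Z₀ ω ∂μ = S := tendsto_nhds_unique htendint hStend
  have hZ₀int : Integrable Z₀ μ := by
    refine hg.mono' (hZ₀meas0.aestronglyMeasurable) ?_
    filter_upwards [hE, hgb i₀, hZub i₀] with ω hω hg₀ hZ₀
    have h1 : Z₀ ω ≤ g ω :=
      ciSup_le fun n => (min_le_left _ _).trans ((le_abs_self _).trans (hω n).2.2)
    have hbd : BddAbove (Set.range fun n => min (Y (q n) ω) (Z ω)) :=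
      ⟨Z ω, by rintro _ ⟨n, rfl⟩; exact min_le_right _ _⟩
    have h2 : min (Y (q 0) ω) (Z ω) ≤ Z₀ ω := le_ciSup hbd 0
    have h3 : -g ω ≤ Z₀ ω := by
      refine le_trans (le_min ?_ ?_) h2
      · exact neg_le_of_abs_le (hω 0).2.2
      · exact le_trans (neg_le_of_abs_le hg₀) hZ₀
    rw [Real.norm_eq_abs, abs_le]
    exact ⟨h3, h1⟩
  -- every Y m is ≤ Z₀ a.e.
  have hYleZ₀ : ∀ m, Y m ≤ᵐ[μ] Z₀ := by
    intro m
    have hmaxint : ∀ n, Integrable (fun ω => max (Y m ω) (Y (q n) ω)) μ := fun n =>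
      (hYint m).sup (hYint (q n))
    have hmaxle : ∀ n, ∫ ω, max (Y m ω) (Y (q n) ω) ∂μ ≤ S := fun n =>
      le_trans (integral_mono_ae (hmaxint n) (hYint (K m (q n))) (hK m (q n))) (hleS _)
    have htendmax : Tendsto (fun n => ∫ ω, max (Y m ω) (Y (q n) ω) ∂μ) atTop
        (𝓝 (∫ ω, max (Y m ω) (Z₀ ω) ∂μ)) := by
      refine tendsto_integral_of_dominated_convergence g
        (fun n => ((hmeas0 m).max (hmeas0 _)).aestronglyMeasurable) hg ?_ ?_
      · intro n
        filter_upwards [hgb m, hgb (q n)] with ω h1 h2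
        rw [Real.norm_eq_abs]
        exact (abs_max_le_max_abs_abs).trans (max_le h1 h2)
      · filter_upwards [htendZ₀] with ω hω
        exact tendsto_const_nhds.max hω
    have hintmax : ∫ ω, max (Y m ω) (Z₀ ω) ∂μ ≤ S :=
      le_of_tendsto htendmax (Eventually.of_forall hmaxle)
    have hmaxint' : Integrable (fun ω => max (Y m ω) (Z₀ ω)) μ :=
      (hYint m).sup hZ₀int
    have hnonneg : 0 ≤ᵐ[μ] fun ω => max (Y m ω) (Z₀ ω) - Z₀ ω :=
      Eventually.of_forall fun ω => by simp [le_max_right]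
    have hintzero : ∫ ω, (max (Y m ω) (Z₀ ω) - Z₀ ω) ∂μ = 0 := by
      rw [integral_sub hmaxint' hZ₀int]
      have h2 := integral_mono_ae hZ₀int hmaxint'
        (Eventually.of_forall fun ω => le_max_right _ _)
      have h1 : ∫ ω, Z₀ ω ∂μ = S := hintZ₀
      linarith
    have hae := (integral_eq_zero_iff_of_nonneg_ae hnonneg
      (hmaxint'.sub hZ₀int)).1 hintzero
    filter_upwards [hae] with ω hω
    have hmax : max (Y m ω) (Z₀ ω) - Z₀ ω = 0 := hω
    have : max (Y m ω) (Z₀ ω) = Z₀ ω := by linarith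
    calc Y m ω ≤ max (Y m ω) (Z₀ ω) := le_max_left _ _
      _ = Z₀ ω := this
  have hZeqZ₀ : Z =ᵐ[μ] Z₀ :=
    (hZlub Z₀ hZ₀meas hYleZ₀).antisymm (Eventually.of_forall hZ₀leZ)
  have hZint : Integrable Z μ := hZ₀int.congr hZeqZ₀.symm
  -- conditional expectations
  set f : ℕ → Ω → ℝ := fun n => μ[Y (q n)|mt] with hfdef
  set F : Ω → ℝ := μ[Z|mt] with hFdef
  have hfint : ∀ n, Integrable (f n) μ := fun n => integrable_condExp
  have hFint : Integrable F μ := integrable_condExp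
  have hfmono : ∀ n, f n ≤ᵐ[μ] f (n + 1) := fun n =>
    condExp_mono (hYint _) (hYint _) (hmono n)
  have hfleF : ∀ n, f n ≤ᵐ[μ] F := fun n =>
    condExp_mono (hYint _) hZint (hZub _)
  set V : Ω → ℝ := fun ω => ⨆ n, min (f n ω) (F ω) with hVdef
  have hVmeas : Measurable[mt] V :=
    Measurable.iSup fun n =>
      (stronglyMeasurable_condExp.measurable).min stronglyMeasurable_condExp.measurable
  have hVleF : ∀ ω, V ω ≤ F ω := fun ω => ciSup_le fun n => min_le_right _ _
  have hEf : ∀ᵐ ω ∂μ, ∀ n, f n ω ≤ F ω ∧ f n ω ≤ f (n + 1) ω := by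
    rw [ae_all_iff]
    intro n
    filter_upwards [hfleF n, hfmono n] with ω h1 h2
    exact ⟨h1, h2⟩
  have hf0leV : ∀ᵐ ω ∂μ, ∀ n, f n ω ≤ V ω := by
    filter_upwards [hEf] with ω hω n
    have hbd : BddAbove (Set.range fun n => min (f n ω) (F ω)) :=
      ⟨F ω, by rintro _ ⟨n, rfl⟩; exact min_le_right _ _⟩
    have := le_ciSup hbd n
    rwa [min_eq_left (hω n).1] at this
  have htendV : ∀ᵐ ω ∂μ, Tendsto (fun n => f n ω) atTop (𝓝 (V ω)) := by
    filter_upwards [hEf] with ω hω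
    have hVeq : V ω = ⨆ n, f n ω := by
      simp only [hVdef]
      exact iSup_congr fun n => min_eq_left (hω n).1
    rw [hVeq]
    refine tendsto_atTop_ciSup (monotone_nat_of_le_succ fun n => (hω n).2) ?_
    exact ⟨F ω, by rintro _ ⟨n, rfl⟩; exact (hω n).1⟩
  have hVmeas0 : Measurable[m0] V := hVmeas.mono hmt le_rfl
  have hf0len : ∀ n, f 0 ≤ᵐ[μ] f n := by
    intro n
    induction n with
    | zero => exact Eventually.of_forall fun ω => le_rfl
    | succ n ih => exact ih.trans (hfmono n)
  have hbound : ∀ n, ∀ᵐ ω ∂μ, ‖f n ω‖ ≤ |f 0 ω| + |F ω| := by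
    intro n
    filter_upwards [hf0len n, hfleF n] with ω h1 h2
    rw [Real.norm_eq_abs, abs_le]
    constructor
    · have h3 : -(|f 0 ω|) ≤ f 0 ω := neg_abs_le _
      have h4 : (0:ℝ) ≤ |F ω| := abs_nonneg _
      linarith
    · have h3 : F ω ≤ |F ω| := le_abs_self _
      have h4 : (0:ℝ) ≤ |f 0 ω| := abs_nonneg _
      linarith
  have hVint : Integrable V μ := by
    refine ((hfint 0).abs.add hFint.abs).mono' (hVmeas0.aestronglyMeasurable) ?_
    filter_upwards [hf0leV] with ω h1
    show |V ω| ≤ |f 0 ω| + |F ω|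
    rw [abs_le]
    constructor
    · have h3 : -(|f 0 ω|) ≤ f 0 ω := neg_abs_le _
      have h4 : (0:ℝ) ≤ |F ω| := abs_nonneg _
      have h5 := h1 0
      linarith
    · have h3 : F ω ≤ |F ω| := le_abs_self _
      have h4 : (0:ℝ) ≤ |f 0 ω| := abs_nonneg _
      have h5 := hVleF ω
      linarith
  have htendintf : Tendsto (fun n => ∫ ω, f n ω ∂μ) atTop (𝓝 (∫ ω, V ω ∂μ)) :=
    tendsto_integral_of_dominated_convergence (fun ω => |f 0 ω| + |F ω|)
      (fun n => (hfint n).aestronglyMeasurable) ((hfint 0).abs.add hFint.abs)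
      hbound htendV
  have hintf : ∀ n, ∫ ω, f n ω ∂μ = ∫ ω, Y (q n) ω ∂μ := fun n =>
    integral_condExp hmt
  have hintFS : ∫ ω, F ω ∂μ = S := by
    rw [hFdef, integral_condExp hmt, integral_congr_ae hZeqZ₀, hintZ₀]
  have hintVS : ∫ ω, V ω ∂μ = S := by
    refine tendsto_nhds_unique ?_ hStend
    convert htendintf using 2 with n
    exact (hintf n).symm
  have hVeqF : V =ᵐ[μ] F := by
    have hnonneg : 0 ≤ᵐ[μ] fun ω => F ω - V ω :=
      Eventually.of_forall fun ω => by simp [hVleF ω]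
    have hzero : ∫ ω, (F ω - V ω) ∂μ = 0 := by
      rw [integral_sub hFint hVint, hintFS, hintVS, sub_self]
    have hae := (integral_eq_zero_iff_of_nonneg_ae hnonneg (hFint.sub hVint)).1 hzero
    filter_upwards [hae] with ω hω
    have : F ω - V ω = 0 := hω
    linarith
  constructor
  · exact fun i => condExp_mono (hYint i) hZint (hZub i)
  · intro U hU
    have hUn : ∀ᵐ ω ∂μ, ∀ n, f n ω ≤ U ω := by
      rw [ae_all_iff]
      exact fun n => hU (q n)
    filter_upwards [hUn, hVeqF] with ω h1 h2
    rw [← h2]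
    exact ciSup_le fun n => (min_le_left _ _).trans (h1 n)

/-- Let `(Y_i)_{i∈I}` be a family of random variables with the lattice property
and `E(ess sup_i |Y_i|) < ∞` (encoded by an integrable dominating function `g`).
If `Z` is the essential supremum and `W` the essential infimum of the family,
then for any sub-σ-field `mt`, conditional expectation commutes with the
essential supremum: `E(Z | mt)` is the essential supremum of the family
`(E(Y_i | mt))_{i∈I}`, and `E(W | mt)` is its essential infimum. -/
theorem condexp_essSup_comm {Ω : Type*} (mt : MeasurableSpace Ω) {m0 : MeasurableSpace Ω}
    (μ : Measure Ω) [IsProbabilityMeasure μ]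
    (hmt : mt ≤ m0) {I : Type*} [Nonempty I]
    (Y : I → Ω → ℝ) (hmeas : ∀ i, Measurable (Y i))
    (hlat : ∀ i j : I,
      (∃ k, ∀ᵐ ω ∂μ, max (Y i ω) (Y j ω) ≤ Y k ω) ∧
      (∃ l, ∀ᵐ ω ∂μ, Y l ω ≤ min (Y i ω) (Y j ω)))
    (g : Ω → ℝ) (hg : Integrable g μ) (hgb : ∀ i, ∀ᵐ ω ∂μ, |Y i ω| ≤ g ω)
    (Z W : Ω → ℝ) (hZmeas : Measurable Z) (hWmeas : Measurable W)
    (hZub : ∀ i, Y i ≤ᵐ[μ] Z)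
    (hZlub : ∀ Z' : Ω → ℝ, Measurable Z' → (∀ i, Y i ≤ᵐ[μ] Z') → Z ≤ᵐ[μ] Z')
    (hWlb : ∀ i, W ≤ᵐ[μ] Y i)
    (hWglb : ∀ W' : Ω → ℝ, Measurable W' → (∀ i, W' ≤ᵐ[μ] Y i) → W' ≤ᵐ[μ] W) :
    ((∀ i, μ[Y i|mt] ≤ᵐ[μ] μ[Z|mt]) ∧
      (∀ U : Ω → ℝ, Measurable[mt] U → (∀ i, μ[Y i|mt] ≤ᵐ[μ] U) →
        μ[Z|mt] ≤ᵐ[μ] U)) ∧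
    ((∀ i, μ[W|mt] ≤ᵐ[μ] μ[Y i|mt]) ∧
      (∀ L : Ω → ℝ, Measurable[mt] L → (∀ i, L ≤ᵐ[μ] μ[Y i|mt]) →
        L ≤ᵐ[μ] μ[W|mt])) := by
  have hsup := aux_condexp_essSup μ mt hmt Y hmeas (fun i j => (hlat i j).1)
    g hg hgb Z hZmeas hZub hZlub
  -- negated family for the infimum
  have hmeas' : ∀ i, Measurable (-Y i) := fun i => (hmeas i).neg
  have hdir' : ∀ i j : I, ∃ k, ∀ᵐ ω ∂μ, max ((-Y i) ω) ((-Y j) ω) ≤ (-Y k) ω := by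
    intro i j
    obtain ⟨l, hl⟩ := (hlat i j).2
    refine ⟨l, hl.mono fun ω h => ?_⟩
    simp only [Pi.neg_apply]
    rw [max_neg_neg]
    exact neg_le_neg h
  have hgb' : ∀ i, ∀ᵐ ω ∂μ, |(-Y i) ω| ≤ g ω := fun i =>
    (hgb i).mono fun ω h => by simpa [abs_neg] using h
  have hWub : ∀ i, (-Y i) ≤ᵐ[μ] (-W) := fun i =>
    (hWlb i).mono fun ω h => neg_le_neg h
  have hWlub : ∀ T : Ω → ℝ, Measurable T → (∀ i, (-Y i) ≤ᵐ[μ] T) →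
      (-W) ≤ᵐ[μ] T := by
    intro T hT hTub
    have h1 : ∀ i, (-T) ≤ᵐ[μ] Y i := fun i =>
      (hTub i).mono fun ω h => by
        simp only [Pi.neg_apply] at h ⊢
        linarith
    have h2 := hWglb (-T) hT.neg h1
    exact h2.mono fun ω h => by
      simp only [Pi.neg_apply] at h ⊢
      linarith
  have hinf := aux_condexp_essSup μ mt hmt (fun i => -Y i) hmeas' hdir'
    g hg hgb' (-W) hWmeas.neg hWub hWlub
  refine ⟨⟨hsup.1, fun U _ hU => hsup.2 U hU⟩, ?_, ?_⟩
  · intro i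
    have h1 := hinf.1 i
    filter_upwards [h1, condExp_neg (μ := μ) (Y i) mt,
      condExp_neg (μ := μ) W mt] with ω hω hY hW
    have hY' : (μ[-Y i|mt]) ω = -(μ[Y i|mt]) ω := by
      rw [hY]; simp
    have hW' : (μ[-W|mt]) ω = -(μ[W|mt]) ω := by
      rw [hW]; simp
    rw [hY', hW'] at hω
    linarith
  · intro L _ hL
    have hU : ∀ i, μ[(fun i => -Y i) i|mt] ≤ᵐ[μ] (-L) := by
      intro i
      filter_upwards [condExp_neg (μ := μ) (Y i) mt, hL i] with ω hY hLω
      have hY' : (μ[-Y i|mt]) ω = -(μ[Y i|mt]) ω := by rw [hY]; simp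
      simp only [Pi.neg_apply]
      rw [hY']
      linarith
    have h2 := hinf.2 (-L) hU
    filter_upwards [h2, condExp_neg (μ := μ) W mt] with ω hω hW
    have hW' : (μ[-W|mt]) ω = -(μ[W|mt]) ω := by rw [hW]; simp
    rw [hW'] at hω
    simp only [Pi.neg_apply] at hω
    linarith
end

section
/- Let U and Ũ be supermartingales on [0,T] with Ũ_t ≤ U_t a.s. and, for all t < u, E(U_u | F_t) ≤ Ũ_t. Then the set of times t for which E(U_t) > E(Ũ_t) is countable, and for every t outside this set, U_t = Ũ_t almost surely. -/
/-!
Write `f t = E(U_t)` and `g t = E(V_t)`. Integrating the hypotheses gives `g ≤ f` and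
`f u ≤ g t` for `t < u`, so `f` is antitone and its right limit at `t` is at most `g t`.
Hence `g t < f t` forces a jump of `f` at `t`, and an antitone function has only countably
many jumps. Where `f t = g t`, the integrable functions `V_t ≤ U_t` have equal integrals,
so they agree almost everywhere.
-/

open MeasureTheory Filter Set

section Sandwich

variable {α β : Type*} [LinearOrder α] [LinearOrder β] {f g : α → β}

theorem antitone_of_sandwich (hgf : ∀ t, g t ≤ f t) (hfg : ∀ t u, t < u → f u ≤ g t) :
    Antitone f := by
  intro s t hst
  rcases hst.eq_or_lt with rfl | hlt
  · exact le_rfl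
  · exact (hfg s t hlt).trans (hgf s)

variable [TopologicalSpace α] [OrderTopology α] [DenselyOrdered α] [NoMaxOrder α]
  [TopologicalSpace β] [OrderTopology β]

theorem le_of_continuousWithinAt_Ioi {t : α} {c : β} (hc : ContinuousWithinAt f (Ioi t) t)
    (hfc : ∀ u, t < u → f u ≤ c) : f t ≤ c :=
  le_of_tendsto hc (eventually_nhdsWithin_of_forall hfc)

theorem countable_setOf_lt_of_sandwich [SecondCountableTopology β] (hgf : ∀ t, g t ≤ f t)
    (hfg : ∀ t u, t < u → f u ≤ g t) : {t | g t < f t}.Countable :=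
  (antitone_of_sandwich hgf hfg).countable_not_continuousAt.mono fun t hlt hc =>
    hlt.not_ge (le_of_continuousWithinAt_Ioi (ContinuousAt.continuousWithinAt hc) (hfg t))

end Sandwich

theorem integral_le_of_condExp_le {Ω : Type*} {m m0 : MeasurableSpace Ω} {μ : Measure Ω}
    {X Y : Ω → ℝ} (hm : m ≤ m0) [SigmaFinite (μ.trim hm)] (hY : Integrable Y μ)
    (h : μ[X|m] ≤ᵐ[μ] Y) : ∫ ω, X ω ∂μ ≤ ∫ ω, Y ω ∂μ :=
  (integral_condExp (μ := μ) (f := X) hm).symm.trans_le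
    (integral_mono_ae integrable_condExp hY h)

/-- Let `U` and `Ũ` (here `V`) be supermartingales with `V_t ≤ U_t` a.s. and
`E(U_u | F_t) ≤ V_t` a.s. for all `t < u`. Then the set of times `t` for which
`E(V_t) < E(U_t)` is countable, and for every `t` outside this set,
`U_t = V_t` almost surely. -/
theorem sandwiched_supermartingales_countable_exceptional_set
    {Ω : Type*} {m0 : MeasurableSpace Ω}
    (μ : Measure Ω) [IsProbabilityMeasure μ]
    (ℱ : Filtration ℝ m0) (U V : ℝ → Ω → ℝ)
    (hU : Supermartingale U ℱ μ) (hV : Supermartingale V ℱ μ)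
    (hle : ∀ t : ℝ, V t ≤ᵐ[μ] U t)
    (hsw : ∀ t u : ℝ, t < u → μ[U u|ℱ t] ≤ᵐ[μ] V t) :
    Set.Countable {t : ℝ | ∫ ω, V t ω ∂μ < ∫ ω, U t ω ∂μ} ∧
    ∀ t ∉ {t : ℝ | ∫ ω, V t ω ∂μ < ∫ ω, U t ω ∂μ}, U t =ᵐ[μ] V t := by
  have hVU : ∀ t, ∫ ω, V t ω ∂μ ≤ ∫ ω, U t ω ∂μ := fun t =>
    integral_mono_ae (hV.integrable t) (hU.integrable t) (hle t)
  have hUV : ∀ t u, t < u → ∫ ω, U u ω ∂μ ≤ ∫ ω, V t ω ∂μ := fun t u htu =>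
    integral_le_of_condExp_le (ℱ.le t) (hV.integrable t) (hsw t u htu)
  refine ⟨countable_setOf_lt_of_sandwich hVU hUV, fun t ht => ?_⟩
  have heq : ∫ ω, V t ω ∂μ = ∫ ω, U t ω ∂μ := (hVU t).antisymm (not_lt.1 ht)
  exact ((integral_eq_iff_of_ae_le (hV.integrable t) (hU.integrable t) (hle t)).1 heq).symm
end

section
/- With U ≥ Ũ as above, define the cumulative difference B̃_t = Σ_{u ∈ [0,t] ∩ I} (U_u − Ũ_u), where I = { t : E(U_t) > E(Ũ_t) } is the countable exceptional set. Then B̃ is a non-negative, increasing, integrable process, and for any t ≤ u < v ≤ T, E(B̃_v − B̃_u | F_t) ≤ E(Ũ_u − Ũ_v | F_t). -/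
/-!
For `t ≤ s < s'` the tower property turns the sandwich condition into
`E[U s' | ℱ t] ≤ E[V s | ℱ t]`, so conditionally on `ℱ t` the intervals
`(E[V s | ℱ t], E[U s | ℱ t])`, `s ∈ (u, v]`, are pairwise disjoint and lie in
`[E[V v | ℱ t], E[V u | ℱ t]]`; their total length `E[B v - B u | ℱ t]` is therefore at most
`E[V u - V v | ℱ t]`. For plain expectations the same interlacing shows that the exceptional set
is countable and that the increments `E[U s - V s]` are summable over bounded intervals, so the
series defining `B` converges a.e. to an integrable limit.
-/

open MeasureTheory Set
open scoped ENNReal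

section Interlacing

variable {α : Type*} [LinearOrder α] {f g : α → ℝ} {C : Set α} {a b : α}

theorem countable_setOf_lt_of_interlaced (hfg : ∀ s s', s < s' → f s' ≤ g s) :
    {s | g s < f s}.Countable := by
  refine PairwiseDisjoint.countable_of_isOpen (s := fun s => Ioo (g s) (f s))
    (fun s _ s' _ hne => ?_) (fun _ _ => isOpen_Ioo) (fun _ hs => nonempty_Ioo.2 hs)
  rcases hne.lt_or_gt with h | h
  · exact disjoint_left.2 fun x hx hx' => ((hx'.2.trans_le (hfg s s' h)).trans hx.1).false
  · exact disjoint_left.2 fun x hx hx' => ((hx.2.trans_le (hfg s' s h)).trans hx'.1).false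

theorem sum_sub_le_of_interlaced (hgf : ∀ s ∈ C, g s ≤ f s)
    (hfg : ∀ s ∈ C, ∀ s' ∈ C, s < s' → f s' ≤ g s) (ha : a ∈ C) (hb : b ∈ C) (hab : a ≤ b)
    (S : Finset α) (hS : ↑S ⊆ C ∩ Ioc a b) : ∑ s ∈ S, (f s - g s) ≤ g a - g b := by
  classical
  induction S using Finset.induction_on_min generalizing a with
  | empty =>
    rcases hab.eq_or_lt with rfl | hlt
    · simp
    · simpa using (hgf b hb).trans (hfg a ha b hb hlt)
  | insert m S hmS ih =>
    have hm : m ∈ C ∩ Ioc a b := hS (by simp)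
    have hS' : ↑S ⊆ C ∩ Ioc m b := fun s hs =>
      ⟨(hS (by simp [hs])).1, hmS s hs, (hS (by simp [hs])).2.2⟩
    rw [Finset.sum_insert fun h => (hmS m h).false]
    linarith [ih hm.1 hm.2.2 hS', hfg a ha m hm.1 hm.2.1]

theorem sum_subtype_sub_le_of_interlaced (hgf : ∀ s ∈ C, g s ≤ f s)
    (hfg : ∀ s ∈ C, ∀ s' ∈ C, s < s' → f s' ≤ g s) (ha : a ∈ C) (hb : b ∈ C) (hab : a ≤ b)
    {K : Set α} (hK : K ⊆ C ∩ Ioc a b) (S : Finset K) :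
    ∑ s ∈ S, (f s - g s) ≤ g a - g b := by
  have hmap : ↑(S.map (Function.Embedding.subtype (· ∈ K))) ⊆ C ∩ Ioc a b := by
    rw [Finset.coe_map]
    rintro _ ⟨s, -, rfl⟩
    exact hK s.2
  simpa using sum_sub_le_of_interlaced hgf hfg ha hb hab _ hmap

theorem summable_sub_of_interlaced (hgf : ∀ s ∈ C, g s ≤ f s)
    (hfg : ∀ s ∈ C, ∀ s' ∈ C, s < s' → f s' ≤ g s) (ha : a ∈ C) (hb : b ∈ C) (hab : a ≤ b)
    {K : Set α} (hK : K ⊆ C ∩ Ioc a b) : Summable fun s : K => f s - g s :=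
  summable_of_sum_le (fun s => sub_nonneg.2 (hgf s (hK s.2).1))
    (sum_subtype_sub_le_of_interlaced hgf hfg ha hb hab hK)

theorem tsum_sub_le_of_interlaced (hgf : ∀ s ∈ C, g s ≤ f s)
    (hfg : ∀ s ∈ C, ∀ s' ∈ C, s < s' → f s' ≤ g s) (ha : a ∈ C) (hb : b ∈ C) (hab : a ≤ b)
    {K : Set α} (hK : K ⊆ C ∩ Ioc a b) : ∑' s : K, (f s - g s) ≤ g a - g b :=
  Real.tsum_le_of_sum_le (fun s => sub_nonneg.2 (hgf s (hK s.2).1))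
    (sum_subtype_sub_le_of_interlaced hgf hfg ha hb hab hK)

end Interlacing

section SubtypeSums

variable {β : Type*} {s t : Set β}

theorem tsum_union_sub_tsum_of_disjoint {E : Type*} [NormedAddCommGroup E] [CompleteSpace E]
    {f : β → E} (hd : Disjoint s t)
    (h : Summable fun x : ↥(s ∪ t) => f x) :
    ∑' x : ↥(s ∪ t), f x - ∑' x : s, f x = ∑' x : t, f x := by
  rw [Summable.tsum_union_disjoint hd (h.comp_injective (inclusion_injective subset_union_left))
    (h.comp_injective (inclusion_injective subset_union_right)), add_sub_cancel_left]

theorem tsum_subtype_le_tsum_subtype_of_nonneg {f : β → ℝ} (hst : s ⊆ t)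
    (hf : ∀ x ∈ t, 0 ≤ f x) (h : Summable fun x : t => f x) :
    ∑' x : s, f x ≤ ∑' x : t, f x :=
  (h.comp_injective (inclusion_injective hst)).tsum_le_tsum_of_inj (inclusion hst)
    (inclusion_injective hst) (fun x _ => hf x x.2) (fun _ => le_rfl) h

end SubtypeSums

section CountableSums

variable {Ω ι : Type*} {m0 : MeasurableSpace Ω} {μ : Measure Ω} {F : ι → Ω → ℝ}

theorem tsum_lintegral_enorm_ne_top_of_nonneg (hF : ∀ i, Integrable (F i) μ)
    (hF0 : ∀ i, 0 ≤ᵐ[μ] F i) (hs : Summable fun i => ∫ ω, F i ω ∂μ) :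
    ∑' i, ∫⁻ ω, ‖F i ω‖ₑ ∂μ ≠ ∞ := by
  have hint : ∀ i, ∫⁻ ω, ‖F i ω‖ₑ ∂μ = ENNReal.ofReal (∫ ω, F i ω ∂μ) := fun i => by
    rw [← ofReal_integral_norm_eq_lintegral_enorm (hF i)]
    exact congrArg _ (integral_congr_ae ((hF0 i).mono fun ω h => Real.norm_of_nonneg h))
  rw [tsum_congr hint, ← ENNReal.ofReal_tsum_of_nonneg (fun i => integral_nonneg_of_ae (hF0 i)) hs]
  exact ENNReal.ofReal_ne_top

variable [Countable ι]

theorem ae_summable_of_tsum_lintegral_enorm_ne_top (hF : ∀ i, AEStronglyMeasurable (F i) μ)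
    (h : ∑' i, ∫⁻ ω, ‖F i ω‖ₑ ∂μ ≠ ∞) : ∀ᵐ ω ∂μ, Summable fun i => F i ω := by
  simp_rw [← eLpNorm_one_eq_lintegral_enorm] at h
  filter_upwards [summable_norm_of_tsum_eLpNorm_ne_top le_rfl hF h] with ω hω
  exact hω.of_norm

theorem integrable_tsum_of_nonneg (hF : ∀ i, AEStronglyMeasurable (F i) μ)
    (hF0 : ∀ i, 0 ≤ᵐ[μ] F i) (h : ∑' i, ∫⁻ ω, ‖F i ω‖ₑ ∂μ ≠ ∞) :
    Integrable (fun ω => ∑' i, F i ω) μ := by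
  have hm : ∀ i, AEMeasurable (fun ω => ‖F i ω‖ₑ) μ := fun i => (hF i).enorm
  refine (integrable_toReal_of_lintegral_ne_top (AEMeasurable.tsum hm)
    (by rwa [lintegral_tsum hm])).congr ?_
  filter_upwards [ae_all_iff.2 hF0] with ω hω
  rw [ENNReal.tsum_toReal_eq fun i => enorm_ne_top]
  exact tsum_congr fun i => by rw [toReal_enorm, Real.norm_of_nonneg (hω i)]

end CountableSums

section Sandwich

variable {Ω ι : Type*} {m0 : MeasurableSpace Ω} {μ : Measure Ω} [IsFiniteMeasure μ]
  [LinearOrder ι] {ℱ : Filtration ι m0} {U V : ι → Ω → ℝ}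

theorem integral_le_integral_of_condExp_le (hV : ∀ s, Integrable (V s) μ)
    (hsw : ∀ s s', s < s' → μ[U s'|ℱ s] ≤ᵐ[μ] V s) {s s' : ι} (h : s < s') :
    ∫ ω, U s' ω ∂μ ≤ ∫ ω, V s ω ∂μ := by
  rw [← integral_condExp (ℱ.le s)]
  exact integral_mono_ae integrable_condExp (hV s) (hsw s s' h)

theorem condExp_le_condExp_of_condExp_le (hV : ∀ s, Integrable (V s) μ)
    (hsw : ∀ s s', s < s' → μ[U s'|ℱ s] ≤ᵐ[μ] V s) {t s s' : ι} (hts : t ≤ s) (h : s < s') :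
    μ[U s'|ℱ t] ≤ᵐ[μ] μ[V s|ℱ t] :=
  (condExp_condExp_of_le (ℱ.mono hts) (ℱ.le s)).symm.trans_le
    (condExp_mono integrable_condExp (hV s) (hsw s s' h))

theorem countable_setOf_integral_lt (hV : ∀ s, Integrable (V s) μ)
    (hsw : ∀ s s', s < s' → μ[U s'|ℱ s] ≤ᵐ[μ] V s) :
    {s | ∫ ω, V s ω ∂μ < ∫ ω, U s ω ∂μ}.Countable :=
  countable_setOf_lt_of_interlaced fun _ _ h => integral_le_integral_of_condExp_le hV hsw h

theorem tsum_lintegral_enorm_sub_ne_top (hU : ∀ s, Integrable (U s) μ)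
    (hV : ∀ s, Integrable (V s) μ) (hle : ∀ s, V s ≤ᵐ[μ] U s)
    (hsw : ∀ s s', s < s' → μ[U s'|ℱ s] ≤ᵐ[μ] V s) {K : Set ι} {a b : ι} (hab : a ≤ b)
    (hK : K ⊆ Ioc a b) : ∑' s : K, ∫⁻ ω, ‖U s ω - V s ω‖ₑ ∂μ ≠ ∞ := by
  refine tsum_lintegral_enorm_ne_top_of_nonneg (fun s => (hU s).sub (hV s))
    (fun s => (hle s).mono fun _ => sub_nonneg.2) ?_
  simp_rw [integral_sub (hU _) (hV _)]
  exact summable_sub_of_interlaced (C := univ) (fun s _ => integral_mono_ae (hV s) (hU s) (hle s))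
    (fun s _ s' _ h => integral_le_integral_of_condExp_le hV hsw h) trivial trivial hab
    (by simpa using hK)

theorem ae_interlaced_condExp (hU : ∀ s, Integrable (U s) μ) (hV : ∀ s, Integrable (V s) μ)
    (hle : ∀ s, V s ≤ᵐ[μ] U s) (hsw : ∀ s s', s < s' → μ[U s'|ℱ s] ≤ᵐ[μ] V s) {t : ι}
    {C : Set ι} (hC : C.Countable) (hCt : ∀ s ∈ C, t ≤ s) :
    ∀ᵐ ω ∂μ, (∀ s ∈ C, μ[V s|ℱ t] ω ≤ μ[U s|ℱ t] ω) ∧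
      ∀ s ∈ C, ∀ s' ∈ C, s < s' → μ[U s'|ℱ t] ω ≤ μ[V s|ℱ t] ω := by
  refine (ae_ball_iff hC).2 (fun s _ => condExp_mono (hV s) (hU s) (hle s)) |>.and ?_
  refine (ae_ball_iff hC).2 fun s hs => (ae_ball_iff hC).2 fun s' _ => ?_
  by_cases h : s < s'
  · filter_upwards [condExp_le_condExp_of_condExp_le hV hsw (hCt s hs) h] with ω hω using
      fun _ => hω
  · exact .of_forall fun _ h' => (h h').elim

theorem condExp_tsum_sub_le (hU : ∀ s, Integrable (U s) μ) (hV : ∀ s, Integrable (V s) μ)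
    (hle : ∀ s, V s ≤ᵐ[μ] U s) (hsw : ∀ s s', s < s' → μ[U s'|ℱ s] ≤ᵐ[μ] V s) {t u v : ι}
    (htu : t ≤ u) (huv : u ≤ v) {K : Set ι} (hKc : K.Countable) (hK : K ⊆ Ioc u v) :
    μ[fun ω => ∑' s : K, (U s ω - V s ω)|ℱ t] ≤ᵐ[μ] μ[fun ω => V u ω - V v ω|ℱ t] := by
  have : Countable K := hKc.to_subtype
  have hCt : ∀ s ∈ insert u (insert v K), t ≤ s := by
    rintro s (rfl | rfl | hs)
    exacts [htu, htu.trans huv, htu.trans (hK hs).1.le]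
  filter_upwards [condExp_tsum (m := ℱ t) (f := fun (s : K) ω => U s ω - V s ω)
      (fun s => ((hU s).sub (hV s)).aestronglyMeasurable)
      (tsum_lintegral_enorm_sub_ne_top hU hV hle hsw huv hK),
    ae_interlaced_condExp hU hV hle hsw ((hKc.insert v).insert u) hCt,
    (ae_ball_iff hKc).2 fun s _ => condExp_sub (hU s) (hV s) (ℱ t),
    condExp_sub (hV u) (hV v) (ℱ t)] with ω hsum ⟨hgf, hfg⟩ hsub hsub_uv
  rw [hsum]
  calc ∑' s : K, μ[fun ω => U s ω - V s ω|ℱ t] ω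
      = ∑' s : K, (μ[U s|ℱ t] ω - μ[V s|ℱ t] ω) := tsum_congr fun s => hsub s s.2
    _ ≤ μ[V u|ℱ t] ω - μ[V v|ℱ t] ω :=
      tsum_sub_le_of_interlaced hgf hfg (mem_insert u _) (mem_insert_of_mem u (mem_insert v K))
        huv fun s hs => ⟨mem_insert_of_mem u (mem_insert_of_mem v hs), hK hs⟩
    _ = μ[fun ω => V u ω - V v ω|ℱ t] ω := hsub_uv.symm

end Sandwich

section CumulativeDifference

variable {Ω : Type*} {m0 : MeasurableSpace Ω} {μ : Measure Ω}
  {ℱ : Filtration ℝ m0} {U V : ℝ → Ω → ℝ} {I : Set ℝ}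

noncomputable def cumulativeDifference (I : Set ℝ) (U V : ℝ → Ω → ℝ) (t : ℝ) (ω : Ω) : ℝ :=
  ∑' s : ↥(I ∩ Icc 0 t), (U s ω - V s ω)

theorem cumulativeDifference_sub {u v : ℝ} (hu : 0 ≤ u) (huv : u ≤ v) {ω : Ω}
    (h : Summable fun s : ↥(I ∩ Icc 0 v) => U s ω - V s ω) :
    cumulativeDifference I U V v ω - cumulativeDifference I U V u ω =
      ∑' s : ↥(I ∩ Ioc u v), (U s ω - V s ω) := by
  have hunion : I ∩ Icc 0 v = (I ∩ Icc 0 u) ∪ (I ∩ Ioc u v) := by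
    rw [← inter_union_distrib_left, Icc_union_Ioc_eq_Icc hu huv]
  have hd : Disjoint (I ∩ Icc 0 u) (I ∩ Ioc u v) :=
    disjoint_left.2 fun _ hx hx' => hx'.2.1.not_ge hx.2.2
  unfold cumulativeDifference
  rw [hunion] at h ⊢
  exact tsum_union_sub_tsum_of_disjoint (f := fun s => U s ω - V s ω) hd h

theorem cumulativeDifference_nonneg (hle : ∀ s, V s ≤ᵐ[μ] U s) (hI : I.Countable) (t : ℝ) :
    0 ≤ᵐ[μ] cumulativeDifference I U V t := by
  filter_upwards [(ae_ball_iff hI).2 fun s _ => hle s] with ω hω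
  exact tsum_nonneg fun s => sub_nonneg.2 (hω s s.2.1)

theorem tsum_lintegral_enorm_sub_Icc_ne_top [IsFiniteMeasure μ] (hU : ∀ s, Integrable (U s) μ)
    (hV : ∀ s, Integrable (V s) μ) (hle : ∀ s, V s ≤ᵐ[μ] U s)
    (hsw : ∀ s s', s < s' → μ[U s'|ℱ s] ≤ᵐ[μ] V s) (t : ℝ) :
    ∑' s : ↥(I ∩ Icc 0 t), ∫⁻ ω, ‖U s ω - V s ω‖ₑ ∂μ ≠ ∞ :=
  tsum_lintegral_enorm_sub_ne_top hU hV hle hsw (a := -1) (b := max t 0)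
    (by linarith [le_max_right t 0])
    fun s hs => ⟨by linarith [hs.2.1], hs.2.2.trans (le_max_left t 0)⟩

theorem ae_summable_sub_Icc [IsFiniteMeasure μ] (hU : ∀ s, Integrable (U s) μ)
    (hV : ∀ s, Integrable (V s) μ) (hle : ∀ s, V s ≤ᵐ[μ] U s)
    (hsw : ∀ s s', s < s' → μ[U s'|ℱ s] ≤ᵐ[μ] V s) (hI : I.Countable) (t : ℝ) :
    ∀ᵐ ω ∂μ, Summable fun s : ↥(I ∩ Icc 0 t) => U s ω - V s ω :=
  have : Countable ↥(I ∩ Icc 0 t) := (hI.mono inter_subset_left).to_subtype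
  ae_summable_of_tsum_lintegral_enorm_ne_top (fun s => ((hU s).sub (hV s)).aestronglyMeasurable)
    (tsum_lintegral_enorm_sub_Icc_ne_top hU hV hle hsw t)

theorem cumulativeDifference_mono [IsFiniteMeasure μ] (hU : ∀ s, Integrable (U s) μ)
    (hV : ∀ s, Integrable (V s) μ) (hle : ∀ s, V s ≤ᵐ[μ] U s)
    (hsw : ∀ s s', s < s' → μ[U s'|ℱ s] ≤ᵐ[μ] V s) (hI : I.Countable) {t u : ℝ} (htu : t ≤ u) :
    cumulativeDifference I U V t ≤ᵐ[μ] cumulativeDifference I U V u := by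
  filter_upwards [(ae_ball_iff hI).2 fun s _ => hle s, ae_summable_sub_Icc hU hV hle hsw hI u]
    with ω hω hsum
  exact tsum_subtype_le_tsum_subtype_of_nonneg
    (inter_subset_inter_right _ (Icc_subset_Icc_right htu))
    (fun s hs => sub_nonneg.2 (hω s hs.1)) hsum

theorem integrable_cumulativeDifference [IsFiniteMeasure μ] (hU : ∀ s, Integrable (U s) μ)
    (hV : ∀ s, Integrable (V s) μ) (hle : ∀ s, V s ≤ᵐ[μ] U s)
    (hsw : ∀ s s', s < s' → μ[U s'|ℱ s] ≤ᵐ[μ] V s) (hI : I.Countable) (t : ℝ) :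
    Integrable (cumulativeDifference I U V t) μ :=
  have : Countable ↥(I ∩ Icc 0 t) := (hI.mono inter_subset_left).to_subtype
  integrable_tsum_of_nonneg (fun s => ((hU s).sub (hV s)).aestronglyMeasurable)
    (fun s => (hle s).mono fun _ => sub_nonneg.2)
    (tsum_lintegral_enorm_sub_Icc_ne_top hU hV hle hsw t)

theorem condExp_cumulativeDifference_sub_le [IsFiniteMeasure μ] (hU : ∀ s, Integrable (U s) μ)
    (hV : ∀ s, Integrable (V s) μ) (hle : ∀ s, V s ≤ᵐ[μ] U s)
    (hsw : ∀ s s', s < s' → μ[U s'|ℱ s] ≤ᵐ[μ] V s) (hI : I.Countable) {t u v : ℝ} (ht : 0 ≤ t)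
    (htu : t ≤ u) (huv : u ≤ v) :
    μ[fun ω => cumulativeDifference I U V v ω - cumulativeDifference I U V u ω|ℱ t]
      ≤ᵐ[μ] μ[fun ω => V u ω - V v ω|ℱ t] := by
  have hsplit := (ae_summable_sub_Icc hU hV hle hsw hI v).mono fun _ =>
    cumulativeDifference_sub (ht.trans htu) huv
  exact (condExp_congr_ae hsplit).trans_le <| condExp_tsum_sub_le hU hV hle hsw htu huv
    (hI.mono inter_subset_left) inter_subset_right

end CumulativeDifference

/-- With supermartingales `U ≥ V` sandwiched as in Lemma 3.14 (i.e.
`E(U_u|F_t) ≤ V_t` for `t < u`), define the cumulative difference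
`B_t = Σ_{u ∈ [0,t] ∩ I} (U_u − V_u)`, where `I = { t : E(V_t) < E(U_t) }` is
the countable exceptional set. Then `B` is a non-negative, increasing,
integrable process, and for any `0 ≤ t ≤ u < v ≤ T`,
`E(B_v − B_u | F_t) ≤ E(V_u − V_v | F_t)` a.s. -/
theorem cumulative_difference_process_properties
    {Ω : Type*} {m0 : MeasurableSpace Ω}
    (μ : Measure Ω) [IsProbabilityMeasure μ]
    (ℱ : Filtration ℝ m0) (U V : ℝ → Ω → ℝ)
    (hU : Supermartingale U ℱ μ) (hV : Supermartingale V ℱ μ)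
    (hle : ∀ t : ℝ, V t ≤ᵐ[μ] U t)
    (hsw : ∀ t u : ℝ, t < u → μ[U u|ℱ t] ≤ᵐ[μ] V t)
    (TT : ℝ)
    (B : ℝ → Ω → ℝ)
    (hB : ∀ t ω, B t ω =
      ∑' u : ({s : ℝ | ∫ ω', V s ω' ∂μ < ∫ ω', U s ω' ∂μ} ∩ Set.Icc 0 t : Set ℝ),
        (U (↑u) ω - V (↑u) ω)) :
    (∀ t : ℝ, 0 ≤ᵐ[μ] B t) ∧
    (∀ t u : ℝ, t ≤ u → B t ≤ᵐ[μ] B u) ∧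
    (∀ t : ℝ, Integrable (B t) μ) ∧
    (∀ t u v : ℝ, 0 ≤ t → t ≤ u → u < v → v ≤ TT →
      μ[fun ω => B v ω - B u ω|ℱ t] ≤ᵐ[μ] μ[fun ω => V u ω - V v ω|ℱ t]) := by
  have hI := countable_setOf_integral_lt hV.integrable hsw
  obtain rfl : B = cumulativeDifference _ U V := funext fun t => funext (hB t)
  exact ⟨cumulativeDifference_nonneg hle hI,
    fun _ _ => cumulativeDifference_mono hU.integrable hV.integrable hle hsw hI,
    integrable_cumulativeDifference hU.integrable hV.integrable hle hsw hI,
    fun _ _ _ ht htu huv _ =>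
      condExp_cumulativeDifference_sub_le hU.integrable hV.integrable hle hsw hI ht htu huv.le⟩
end

section
/- A right-continuous supermartingale dominated in absolute value by an RCLL uniformly integrable martingale is of class (D): the family of its values at all stopping times with values in [0,T] is uniformly integrable. -/
/-!
Approximate a stopping time `ρ ≤ T` from above by the dyadic stopping times
`ρₙ = ⌈2ⁿ ρ⌉ / 2ⁿ ≤ T + 1`. Optional sampling for the countably-valued `ρₙ` gives
`M_{ρₙ} = 𝔼[M_{T+1} | ℱ_{ρₙ}]`, and right-continuity gives `M_{ρₙ} → M_ρ`. Conditional expectations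
of one integrable variable form a uniformly integrable family, and a.e. limits of sequences from a
uniformly integrable family are again uniformly integrable, so `{M_ρ}` is uniformly integrable.
Right-continuity also upgrades `|X_t| ≤ M_t` a.s. for each `t` to a.s. for all `t` at once, so
`|X_ρ| ≤ |M_ρ|` and `{X_ρ}` inherits uniform integrability.
-/

open MeasureTheory Filter Topology Set
open scoped ENNReal

theorem measurable_apply_of_countable_range {Ω ι β : Type*} [MeasurableSpace Ω]
    [MeasurableSpace ι] [MeasurableSingletonClass ι] [MeasurableSpace β]
    {u : ι → Ω → β} (hu : ∀ i, Measurable (u i)) {τ : Ω → ι} (hτ : Measurable τ)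
    (hτ_range : (range τ).Countable) : Measurable fun ω => u (τ ω) ω := by
  intro s hs
  have hpre : (fun ω => u (τ ω) ω) ⁻¹' s = ⋃ i ∈ range τ, τ ⁻¹' {i} ∩ u i ⁻¹' s := by
    ext ω
    simp only [mem_preimage, mem_iUnion, mem_inter_iff, mem_singleton_iff, exists_prop]
    exact ⟨fun h => ⟨τ ω, mem_range_self ω, rfl, h⟩, by rintro ⟨i, -, rfl, h⟩; exact h⟩
  rw [hpre]
  exact .biUnion hτ_range fun i _ => (hτ (measurableSet_singleton i)).inter (hu i hs)

noncomputable def dyadicCeil (n : ℕ) (x : ℝ) : ℝ := ⌈x * 2 ^ n⌉ / 2 ^ n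

theorem le_dyadicCeil (n : ℕ) (x : ℝ) : x ≤ dyadicCeil n x := by
  rw [dyadicCeil, le_div_iff₀ (by positivity)]
  exact Int.le_ceil _

theorem dyadicCeil_le_add (n : ℕ) (x : ℝ) : dyadicCeil n x ≤ x + (2 ^ n)⁻¹ := by
  rw [dyadicCeil, div_le_iff₀ (by positivity), add_mul, inv_mul_cancel₀ (by positivity)]
  exact (Int.ceil_lt_add_one _).le

theorem dyadicCeil_le_iff (n : ℕ) (x t : ℝ) :
    dyadicCeil n x ≤ t ↔ x ≤ ⌊t * 2 ^ n⌋ / 2 ^ n := by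
  rw [dyadicCeil, div_le_iff₀ (by positivity), le_div_iff₀ (by positivity), ← Int.le_floor,
    Int.ceil_le]

theorem monotone_dyadicCeil (n : ℕ) : Monotone (dyadicCeil n) := fun _ _ hxy =>
  div_le_div_of_nonneg_right (Int.cast_mono (Int.ceil_mono (by gcongr))) (by positivity)

theorem countable_range_dyadicCeil (n : ℕ) : (range (dyadicCeil n)).Countable :=
  (countable_range fun k : ℤ => (k : ℝ) / 2 ^ n).mono 
    (range_subset_iff.2 fun x => mem_range_self (⌈x * 2 ^ n⌉ : ℤ))

theorem tendsto_dyadicCeil (x : ℝ) : Tendsto (fun n => dyadicCeil n x) atTop (𝓝[≥] x) := by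
  refine tendsto_nhdsWithin_iff.2 ⟨?_, .of_forall fun n => le_dyadicCeil n x⟩
  have hpow : Tendsto (fun n : ℕ => ((2 : ℝ) ^ n)⁻¹) atTop (𝓝 0) := by
    simp_rw [← inv_pow]
    exact tendsto_pow_atTop_nhds_zero_of_lt_one (by norm_num) (by norm_num)
  have hupper : Tendsto (fun n : ℕ => x + ((2 : ℝ) ^ n)⁻¹) atTop (𝓝 x) := by
    simpa using tendsto_const_nhds.add hpow
  exact tendsto_of_tendsto_of_tendsto_of_le_of_le tendsto_const_nhds hupper
    (le_dyadicCeil · x) (dyadicCeil_le_add · x)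

theorem dyadicCeil_le_add_one {x T : ℝ} (hx : x ≤ T) (n : ℕ) : dyadicCeil n x ≤ T + 1 :=
  (dyadicCeil_le_add n x).trans (add_le_add hx (inv_le_one_of_one_le₀ (one_le_pow₀ one_le_two)))

theorem measurable_apply_of_continuousWithinAt_Ici {Ω β : Type*} [MeasurableSpace Ω]
    [TopologicalSpace β] [TopologicalSpace.PseudoMetrizableSpace β] [MeasurableSpace β]
    [BorelSpace β]
    {u : ℝ → Ω → β} (hu : ∀ t, Measurable (u t))
    (hu_rc : ∀ ω t, ContinuousWithinAt (fun s => u s ω) (Ici t) t)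
    {ρ : Ω → ℝ} (hρ : Measurable ρ) : Measurable fun ω => u (ρ ω) ω := by
  refine measurable_of_tendsto_metrizable (f := fun n ω => u (dyadicCeil n (ρ ω)) ω)
    (fun n => measurable_apply_of_countable_range hu ((monotone_dyadicCeil n).measurable.comp hρ)
      ((countable_range_dyadicCeil n).mono (range_comp_subset_range ρ (dyadicCeil n)))) ?_
  exact tendsto_pi_nhds.2 fun ω => (hu_rc ω (ρ ω)).tendsto.comp (tendsto_dyadicCeil (ρ ω))

theorem ae_forall_le_of_continuousWithinAt_Ici {Ω : Type*} [MeasurableSpace Ω] {μ : Measure Ω}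
    {f g : ℝ → Ω → ℝ} (hf : ∀ ω t, ContinuousWithinAt (fun s => f s ω) (Ici t) t)
    (hg : ∀ ω t, ContinuousWithinAt (fun s => g s ω) (Ici t) t)
    (hfg : ∀ t, ∀ᵐ ω ∂μ, f t ω ≤ g t ω) : ∀ᵐ ω ∂μ, ∀ t, f t ω ≤ g t ω := by
  filter_upwards [ae_all_iff.2 fun q : ℚ => hfg q] with ω hω t
  have ht : t ∈ closure (Ioi t ∩ range ((↑) : ℚ → ℝ)) := by
    have := closure_mono (Rat.denseRange_cast.open_subset_closure_inter (isOpen_Ioi (a := t)))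
    rw [closure_closure, closure_Ioi] at this
    exact this self_mem_Ici
  refine ContinuousWithinAt.closure_le (f := fun s => f s ω) (g := fun s => g s ω) ht
    ((hf ω t).mono fun s hs => mem_Ici.2 hs.1.le) ((hg ω t).mono fun s hs => mem_Ici.2 hs.1.le) ?_
  rintro _ ⟨-, q, rfl⟩
  exact hω q

namespace MeasureTheory

variable {Ω : Type*} {m0 : MeasurableSpace Ω} {μ : Measure Ω}

theorem UniformIntegrable.of_forall_exists_ae_norm_le {ι κ E F : Type*}
    [NormedAddCommGroup E] [NormedAddCommGroup F] {p : ℝ≥0∞}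
    {g : ι → Ω → E} {f : κ → Ω → F} (hg : UniformIntegrable g p μ)
    (hf : ∀ k, AEStronglyMeasurable (f k) μ) (hfg : ∀ k, ∃ i, ∀ᵐ ω ∂μ, ‖f k ω‖ ≤ ‖g i ω‖) :
    UniformIntegrable f p μ := by
  choose i hi using hfg
  obtain ⟨-, hunif, C, hC⟩ := hg
  refine ⟨hf, fun ε hε => ?_, C, fun k => (eLpNorm_mono_ae (hi k)).trans (hC (i k))⟩
  obtain ⟨δ, hδ, hδs⟩ := hunif hε
  refine ⟨δ, hδ, fun k s hs hμs => (eLpNorm_mono_ae ?_).trans (hδs (i k) s hs hμs)⟩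
  filter_upwards [hi k] with ω hω
  by_cases hωs : ω ∈ s <;> simp [hωs, hω]

section Filtration

variable {ℱ : Filtration ℝ m0}

theorem IsStoppingTime.measurable_real {ρ : Ω → ℝ}
    (hρ : IsStoppingTime ℱ fun ω => (ρ ω : WithTop ℝ)) : Measurable ρ := by
  simpa using hρ.measurable'.untopA

theorem IsStoppingTime.dyadicCeil {ρ : Ω → ℝ}
    (hρ : IsStoppingTime ℱ fun ω => (ρ ω : WithTop ℝ)) (n : ℕ) :
    IsStoppingTime ℱ fun ω => (dyadicCeil n (ρ ω) : WithTop ℝ) := by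
  intro t
  simp only [WithTop.coe_le_coe, dyadicCeil_le_iff]
  have hle : (⌊t * 2 ^ n⌋ : ℝ) / 2 ^ n ≤ t := by
    rw [div_le_iff₀ (by positivity)]
    exact Int.floor_le _
  exact ℱ.mono hle _ (by simpa using hρ ((⌊t * 2 ^ n⌋ : ℝ) / 2 ^ n))

theorem Martingale.ae_tendsto_condExp_dyadicCeil [IsFiniteMeasure μ] {M : ℝ → Ω → ℝ}
    (hM : Martingale M ℱ μ) (hM_rc : ∀ ω t, ContinuousWithinAt (fun s => M s ω) (Ici t) t)
    {ρ : Ω → ℝ} (hρ : IsStoppingTime ℱ fun ω => (ρ ω : WithTop ℝ)) {T : ℝ} (hρT : ∀ ω, ρ ω ≤ T) :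
    ∀ᵐ ω ∂μ, Tendsto (fun n => μ[M (T + 1) | (hρ.dyadicCeil n).measurableSpace] ω) atTop
      (𝓝 (M (ρ ω) ω)) := by
  have hOS n : stoppedValue M (fun ω => (dyadicCeil n (ρ ω) : WithTop ℝ)) =ᵐ[μ]
      μ[M (T + 1) | (hρ.dyadicCeil n).measurableSpace] :=
    hM.stoppedValue_ae_eq_condExp_of_le_const_of_countable_range (hρ.dyadicCeil n)
      (fun ω => WithTop.coe_le_coe.2 (dyadicCeil_le_add_one (hρT ω) n))
      (((countable_range_dyadicCeil n).image (↑)).mono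
        (by rw [← range_comp]; exact range_comp_subset_range ρ (WithTop.some ∘ dyadicCeil n)))
  filter_upwards [ae_all_iff.2 hOS] with ω hω
  exact ((hM_rc ω (ρ ω)).tendsto.comp (tendsto_dyadicCeil (ρ ω))).congr hω

theorem Martingale.uniformIntegrable_apply_stoppingTime [IsFiniteMeasure μ] {M : ℝ → Ω → ℝ}
    (hM : Martingale M ℱ μ) (hM_rc : ∀ ω t, ContinuousWithinAt (fun s => M s ω) (Ici t) t)
    (T : ℝ) :
    UniformIntegrable (fun ρ : {ρ : Ω → ℝ //
        IsStoppingTime ℱ (fun ω => (ρ ω : WithTop ℝ)) ∧ ∀ ω, ρ ω ≤ T} =>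
      fun ω => M (ρ.1 ω) ω) 1 μ := by
  have hcondExp := (hM.integrable (T + 1)).uniformIntegrable_condExp
    (ℱ := fun 𝒢 : {𝒢 : MeasurableSpace Ω // 𝒢 ≤ m0} => 𝒢.1) fun 𝒢 => 𝒢.2
  have hui := hcondExp.uniformIntegrable_of_ae_tendsto (atTop : Filter ℕ)
  refine hui.of_forall_exists_ae_norm_le (fun ρ => ?_) fun ⟨ρ, hρ, hρT⟩ => ?_
  · exact (measurable_apply_of_continuousWithinAt_Ici
      (fun t => (hM.stronglyAdapted t).measurable.mono (ℱ.le t) le_rfl) hM_rc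
      ρ.2.1.measurable_real).aestronglyMeasurable
  · exact ⟨⟨fun ω => M (ρ ω) ω, fun n => ⟨_, (hρ.dyadicCeil n).measurableSpace_le_of_le
      fun ω => WithTop.coe_le_coe.2 (dyadicCeil_le_add_one (hρT ω) n)⟩,
      hM.ae_tendsto_condExp_dyadicCeil hM_rc hρ hρT⟩, .of_forall fun ω => le_rfl⟩

end Filtration

end MeasureTheory

theorem rcll_dominated_supermartingale_classD_general
    {Ω : Type*} {m0 : MeasurableSpace Ω}
    (μ : Measure Ω) [IsProbabilityMeasure μ]
    (ℱ : Filtration ℝ m0) (X M : ℝ → Ω → ℝ) (TT : ℝ)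
    (hX : Supermartingale X ℱ μ)
    (hXrc : ∀ ω t, ContinuousWithinAt (fun u => X u ω) (Set.Ici t) t)
    (hM : Martingale M ℱ μ)
    (hMrc : ∀ ω t, ContinuousWithinAt (fun u => M u ω) (Set.Ici t) t)
    (hdom : ∀ t : ℝ, ∀ᵐ ω ∂μ, |X t ω| ≤ M t ω) :
    UniformIntegrable
      (fun ρ : {ρ : Ω → ℝ // IsStoppingTime ℱ (fun ω => (ρ ω : WithTop ℝ)) ∧ ∀ ω, ρ ω ∈ Set.Icc 0 TT} =>
        fun ω => X (ρ.1 ω) ω) 1 μ := by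
  have hX_meas t : Measurable (X t) := (hX.stronglyAdapted t).measurable.mono (ℱ.le t) le_rfl
  have hdom_all : ∀ᵐ ω ∂μ, ∀ t, |X t ω| ≤ M t ω :=
    ae_forall_le_of_continuousWithinAt_Ici (fun ω t => (hXrc ω t).abs) hMrc hdom
  refine (hM.uniformIntegrable_apply_stoppingTime hMrc TT).of_forall_exists_ae_norm_le
    (fun ρ => (measurable_apply_of_continuousWithinAt_Ici hX_meas hXrc
      ρ.2.1.measurable_real).aestronglyMeasurable)
    fun ⟨ρ, hρ, hρT⟩ => ⟨⟨ρ, hρ, fun ω => (hρT ω).2⟩, ?_⟩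
  filter_upwards [hdom_all] with ω hω
  simpa only [Real.norm_eq_abs] using (hω (ρ ω)).trans (le_abs_self _)

/-- A right-continuous supermartingale (with left limits) dominated in absolute
value by an RCLL uniformly integrable martingale is of class (D): the family of
its values at all stopping times with values in `[0, T]` is uniformly
integrable. -/
theorem rcll_dominated_supermartingale_classD
    {Ω : Type*} {m0 : MeasurableSpace Ω}
    (μ : Measure Ω) [IsProbabilityMeasure μ]
    (ℱ : Filtration ℝ m0) (X M : ℝ → Ω → ℝ) (TT : ℝ)
    (hX : Supermartingale X ℱ μ)
    (hXrc : ∀ ω t, ContinuousWithinAt (fun u => X u ω) (Set.Ici t) t)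
    (hXll : ∀ ω t, ∃ l : ℝ, Tendsto (fun u => X u ω) (nhdsWithin t (Set.Iio t)) (nhds l))
    (hM : Martingale M ℱ μ)
    (hMrc : ∀ ω t, ContinuousWithinAt (fun u => M u ω) (Set.Ici t) t)
    (hMll : ∀ ω t, ∃ l : ℝ, Tendsto (fun u => M u ω) (nhdsWithin t (Set.Iio t)) (nhds l))
    (hMui : UniformIntegrable (fun t : ℝ => M t) 1 μ)
    (hdom : ∀ t : ℝ, ∀ᵐ ω ∂μ, |X t ω| ≤ M t ω) :
    UniformIntegrable
      (fun ρ : {ρ : Ω → ℝ // IsStoppingTime ℱ (fun ω => (ρ ω : WithTop ℝ)) ∧ ∀ ω, ρ ω ∈ Set.Icc 0 TT} =>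
        fun ω => X (ρ.1 ω) ω) 1 μ :=
  rcll_dominated_supermartingale_classD_general μ ℱ X M TT hX hXrc hM hMrc hdom
end

section
/- Suppose the subgame on [t,T] has an optimal equilibrium s* = (τ*, σ*), i.e., for every player k, V̂^k_t(τ*, σ*) = ess inf_{σ} V̂^k_t(τ*, σ) = ess sup_{τ} V̂^k_t(τ, σ*). If moreover Σ_{k∈M} V̂^k_t(s*) = ess sup_{s'} Σ_{k∈M} V̂^k_t(s'), then for every coalition A ⊆ M the upper and lower prices coincide: ess sup_{τ∈S^A_t} ess inf_{σ∈S^{-A}_t} V̂^A_t(τ,σ) = ess inf_{σ∈S^{-A}_t} ess sup_{τ∈S^A_t} V̂^A_t(τ,σ) = Σ_{k∈A} V̂^k_t(s*). -/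
open MeasureTheory Filter

/-- `g` is the essential supremum (least upper bound in the a.s. order, among
measurable functions) of the family `f`. -/
def IsEssSupFam {Ω α : Type*} {m : MeasurableSpace Ω} (μ : Measure Ω)
    (f : α → Ω → ℝ) (g : Ω → ℝ) : Prop :=
  (∀ a, f a ≤ᵐ[μ] g) ∧
    ∀ h : Ω → ℝ, Measurable h → (∀ a, f a ≤ᵐ[μ] h) → g ≤ᵐ[μ] h

/-- `g` is the essential infimum (greatest lower bound in the a.s. order, among
measurable functions) of the family `f`. -/
def IsEssInfFam {Ω α : Type*} {m : MeasurableSpace Ω} (μ : Measure Ω)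
    (f : α → Ω → ℝ) (g : Ω → ℝ) : Prop :=
  (∀ a, g ≤ᵐ[μ] f a) ∧
    ∀ h : Ω → ℝ, Measurable h → (∀ a, h ≤ᵐ[μ] f a) → h ≤ᵐ[μ] g

/-- Suppose the subgame has an optimal equilibrium `s*` (each player's
conditional expected payoff `H k s*` is both his guaranteed payoff against any
opposing deviation and his best reply payoff), and the total conditional payoff
is maximal at `s*`. Then for every coalition `A` the upper and lower prices
coincide and equal `Σ_{k∈A} H k s*`: it is simultaneously the essential supremum
over `τ` of the essential infimum over `σ` of the coalition payoff, and the
essential infimum over `σ` of the essential supremum over `τ`. -/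
theorem optimal_equilibrium_upper_eq_lower_price
    {Ω : Type*} {m0 : MeasurableSpace Ω}
    (μ : Measure Ω) [IsProbabilityMeasure μ]
    {ι : Type*} [Fintype ι] [DecidableEq ι] {S : ι → Type*} [∀ i, Nonempty (S i)]
    (H : ι → (∀ i, S i) → Ω → ℝ) (hHmeas : ∀ j s, Measurable (H j s))
    (sstar : ∀ i, S i)
    (hguar : ∀ (k : ι) (ρ : ∀ i, S i),
      H k sstar ≤ᵐ[μ] H k (Function.update ρ k (sstar k)))
    (hbest : ∀ (k : ι) (a : S k),
      H k (Function.update sstar k a) ≤ᵐ[μ] H k sstar)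
    (hmax : ∀ s : ∀ i, S i,
      (fun ω => ∑ j, H j s ω) ≤ᵐ[μ] fun ω => ∑ j, H j sstar ω) :
    ∀ A : Finset ι,
      (∀ G : (∀ i, S i) → Ω → ℝ,
        (∀ τ, IsEssInfFam μ
          (fun ρ : ∀ i, S i => fun ω => ∑ j ∈ A, H j (comb A τ ρ) ω) (G τ)) →
        IsEssSupFam μ G (fun ω => ∑ j ∈ A, H j sstar ω)) ∧
      (∀ G' : (∀ i, S i) → Ω → ℝ,
        (∀ ρ, IsEssSupFam μ
          (fun τ : ∀ i, S i => fun ω => ∑ j ∈ A, H j (comb A τ ρ) ω) (G' ρ)) →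
        IsEssInfFam μ G' (fun ω => ∑ j ∈ A, H j sstar ω)) := by
  intro A
  have hVmeas : Measurable (fun ω => ∑ j ∈ A, H j sstar ω) :=
    Finset.measurable_sum _ (fun j _ => hHmeas j sstar)
  have hL : ∀ ρ : ∀ i, S i,
      (fun ω => ∑ j ∈ A, H j sstar ω) ≤ᵐ[μ] fun ω => ∑ j ∈ A, H j (comb A sstar ρ) ω := by
    intro ρ
    have h1 : ∀ᵐ ω ∂μ, ∀ j : ι,
        H j sstar ω ≤ H j (Function.update (comb A sstar ρ) j (sstar j)) ω :=
      ae_all_iff.2 fun j => hguar j (comb A sstar ρ)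
    filter_upwards [h1] with ω hω
    refine Finset.sum_le_sum fun j hj => ?_
    have hup : Function.update (comb A sstar ρ) j (sstar j) = comb A sstar ρ := by
      have hc : comb A sstar ρ j = sstar j := if_pos hj
      conv_lhs => rw [← hc]
      exact Function.update_eq_self j _
    have := hω j
    rwa [hup] at this
  have hU : ∀ τ : ∀ i, S i,
      (fun ω => ∑ j ∈ A, H j (comb A τ sstar) ω) ≤ᵐ[μ] fun ω => ∑ j ∈ A, H j sstar ω := by
    intro τ
    have h1 : ∀ᵐ ω ∂μ, ∀ j : ι, j ∉ A → H j sstar ω ≤ H j (comb A τ sstar) ω := by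
      rw [ae_all_iff]
      intro j
      by_cases hj : j ∈ A
      · filter_upwards with ω h; exact absurd hj h
      · have hup : Function.update (comb A τ sstar) j (sstar j) = comb A τ sstar := by
          have hc : comb A τ sstar j = sstar j := if_neg hj
          conv_lhs => rw [← hc]
          exact Function.update_eq_self j _
        filter_upwards [hguar j (comb A τ sstar)] with ω h _
        rwa [hup] at h
    filter_upwards [h1, hmax (comb A τ sstar)] with ω hω hmaxω
    have e1 : ∑ j ∈ A, H j (comb A τ sstar) ω + ∑ j ∈ Aᶜ, H j (comb A τ sstar) ω
        = ∑ j, H j (comb A τ sstar) ω := Finset.sum_add_sum_compl A _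
    have e2 : ∑ j ∈ A, H j sstar ω + ∑ j ∈ Aᶜ, H j sstar ω = ∑ j, H j sstar ω :=
      Finset.sum_add_sum_compl A _
    have e3 : ∑ j ∈ Aᶜ, H j sstar ω ≤ ∑ j ∈ Aᶜ, H j (comb A τ sstar) ω :=
      Finset.sum_le_sum fun j hj => hω j (Finset.mem_compl.mp hj)
    linarith
  refine ⟨?_, ?_⟩
  · intro G hG
    refine ⟨fun τ => ((hG τ).1 sstar).trans (hU τ), fun h hmeas hub => ?_⟩
    exact ((hG sstar).2 _ hVmeas hL).trans (hub sstar)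
  · intro G' hG'
    refine ⟨fun ρ => (hL ρ).trans ((hG' ρ).1 sstar), fun h hmeas hlb => ?_⟩
    exact (hlb sstar).trans ((hG' sstar).2 _ hVmeas hU)
end
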